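/- arXiv:2601.09435 — 10 statements merged into one kernel-verified Lean document; each statement's English description precedes it below -/
import Mathlib

section
/- Let n ≥ 2 be an integer, p > 1, and r ∈ (0,1). Let Σ' ⊂ ℝ^{n−1} be a bounded open convex set containing the origin, with Lebesgue measure |Σ'| > 0, and write d(x') := dist(x', Σ'). Let c1 ≥ c2 > 0 and let h1, h2 : ℝ^{n−1} → ℝ be continuous functions such that h1(x') = h2(x') for all x' in the closure of Σ', and c2·d(x')² ≤ h1(x') − h2(x') ≤ c1·d(x')² for all x' with 0 < d(x') < 1. Then lim_{ε→0⁺} (ε^{p−1}/|Σ'|) · ∫_{{x' ∈ ℝ^{n−1} : d(x') < r}} (ε + h1(x') − h2(x'))^{1−p} dx' = 1. -/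
open MeasureTheory Filter Set Metric Topology

/-!
Writing `g = h1 - h2`, the scaled integrand is
`ε ^ (p - 1) * (ε + g) ^ (1 - p) = (ε / (ε + g)) ^ (p - 1)`, which lies in `[0, 1]` and tends to
the indicator of `{g = 0}` as `ε → 0⁺`. By dominated convergence the scaled integral tends to
the measure of `{d < r} ∩ {g = 0}`. The lower bound `g ≥ c2 d²` identifies this set with
`closure Σ'`, whose measure is `|Σ'|` because the frontier of a convex set is Lebesgue-null.
-/

theorem tendsto_div_add_rpow_nhdsGT_zero {a y : ℝ} (ha : 0 < a) (hy : 0 ≤ y) :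
    Tendsto (fun ε : ℝ => (ε / (ε + y)) ^ a) (𝓝[>] 0) (𝓝 (if y = 0 then 1 else 0)) := by
  split_ifs with hy0
  · subst hy0
    refine tendsto_const_nhds.congr' ?_
    filter_upwards [self_mem_nhdsWithin] with ε hε
    rw [add_zero, div_self (ne_of_gt hε), Real.one_rpow]
  · have hcont : ContinuousAt (fun ε : ℝ => (ε / (ε + y)) ^ a) 0 :=
      (continuousAt_id.div (continuousAt_id.add continuousAt_const) (by simpa using hy0)).rpow_const
        (Or.inr ha.le)
    simpa [Real.zero_rpow ha.ne'] using hcont.tendsto.mono_left nhdsWithin_le_nhds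

section DominatedConvergence

variable {X : Type*} [MeasurableSpace X] {μ : Measure X} {U : Set X} {g : X → ℝ} {a : ℝ}

theorem tendsto_setIntegral_div_add_rpow (ha : 0 < a) (hU : MeasurableSet U) (hμU : μ U ≠ ⊤)
    (hg : Measurable g) (hg0 : ∀ x ∈ U, 0 ≤ g x) :
    Tendsto (fun ε : ℝ => ∫ x in U, (ε / (ε + g x)) ^ a ∂μ) (𝓝[>] 0)
      (𝓝 (μ.real (U ∩ {x | g x = 0}))) := by
  have hZ : MeasurableSet {x | g x = 0} := hg (measurableSet_singleton 0)
  rw [← inter_comm, ← measureReal_restrict_apply hZ, ← integral_indicator_one hZ]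
  refine tendsto_integral_filter_of_dominated_convergence (fun _ => 1) ?_ ?_ ?_ ?_
  · exact Eventually.of_forall fun ε => (by fun_prop : Measurable _).aestronglyMeasurable
  · filter_upwards [self_mem_nhdsWithin] with ε hε
    filter_upwards [ae_restrict_mem hU] with x hx
    have hden : ε ≤ ε + g x := le_add_of_nonneg_right (hg0 x hx)
    have hq0 : 0 ≤ ε / (ε + g x) := div_nonneg hε.le (hε.le.trans hden)
    rw [Real.norm_of_nonneg (Real.rpow_nonneg hq0 a)]
    exact Real.rpow_le_one hq0 (div_le_one_of_le₀ hden (hε.le.trans hden)) ha.le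
  · exact integrableOn_const hμU
  · filter_upwards [ae_restrict_mem hU] with x hx
    simpa [indicator_apply] using tendsto_div_add_rpow_nhdsGT_zero ha (hg0 x hx)

theorem tendsto_rpow_mul_setIntegral_add_rpow_neg (ha : 0 < a) (hU : MeasurableSet U)
    (hμU : μ U ≠ ⊤) (hg : Measurable g) (hg0 : ∀ x ∈ U, 0 ≤ g x) :
    Tendsto (fun ε : ℝ => ε ^ a * ∫ x in U, (ε + g x) ^ (-a) ∂μ) (𝓝[>] 0)
      (𝓝 (μ.real (U ∩ {x | g x = 0}))) := by
  refine (tendsto_setIntegral_div_add_rpow ha hU hμU hg hg0).congr' ?_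
  filter_upwards [self_mem_nhdsWithin] with ε hε
  rw [← integral_const_mul]
  refine setIntegral_congr_fun hU fun x hx => ?_
  have hpos : 0 ≤ ε + g x := add_nonneg (le_of_lt hε) (hg0 x hx)
  rw [Real.div_rpow (le_of_lt hε) hpos, Real.rpow_neg hpos, div_eq_mul_inv]

end DominatedConvergence

section InfDist

variable {X : Type*} [PseudoMetricSpace X] {S : Set X} {g : X → ℝ}

theorem nonneg_of_infDist_lt_one (hS : S.Nonempty) (hzero : ∀ x ∈ closure S, g x = 0)
    (hpos : ∀ x, 0 < infDist x S → infDist x S < 1 → 0 < g x) {x : X} (hx : infDist x S < 1) :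
    0 ≤ g x := by
  rcases (infDist_nonneg (x := x) (s := S)).eq_or_lt with hd | hd
  · exact (hzero x ((mem_closure_iff_infDist_zero hS).2 hd.symm)).ge
  · exact (hpos x hd hx).le

theorem thickening_inter_setOf_eq_zero_eq_closure (hS : S.Nonempty)
    (hzero : ∀ x ∈ closure S, g x = 0)
    (hpos : ∀ x, 0 < infDist x S → infDist x S < 1 → 0 < g x) {r : ℝ} (hr0 : 0 < r)
    (hr1 : r ≤ 1) :
    thickening r S ∩ {x | g x = 0} = closure S := by
  ext x
  refine ⟨fun ⟨hx, hgx⟩ => ?_,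
    fun hx => ⟨closure_subset_thickening hr0 S hx, hzero x hx⟩⟩
  rw [mem_thickening_iff_infDist_lt hS] at hx
  rw [mem_closure_iff_infDist_zero hS]
  by_contra hd
  exact (hpos x (lt_of_le_of_ne infDist_nonneg (Ne.symm hd)) (hx.trans_le hr1)).ne' hgx

end InfDist

theorem flat_boundary_scaled_integral_tendsto_one_general
    {n : ℕ} (p : ℝ) (hp : 1 < p) (r : ℝ) (hr : r ∈ Ioo (0:ℝ) 1)
    (S : Set (EuclideanSpace ℝ (Fin (n-1))))
    (hSb : Bornology.IsBounded S) (hSc : Convex ℝ S)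
    (hSpos : 0 < (volume S).toReal)
    (c2 : ℝ) (hc2 : 0 < c2)
    (h1 h2 : EuclideanSpace ℝ (Fin (n-1)) → ℝ)
    (hh1 : Continuous h1) (hh2 : Continuous h2)
    (heq : ∀ x' ∈ closure S, h1 x' = h2 x')
    (hlow : ∀ x', 0 < infDist x' S → infDist x' S < 1 →
      c2 * (infDist x' S) ^ 2 ≤ h1 x' - h2 x') :
    Tendsto (fun ε : ℝ =>
      ε ^ (p - 1) / (volume S).toReal *
        ∫ x' in {x' : EuclideanSpace ℝ (Fin (n-1)) | infDist x' S < r},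
          (ε + h1 x' - h2 x') ^ (1 - p))
      (nhdsWithin 0 (Ioi 0)) (nhds 1) := by
  have hS : S.Nonempty := nonempty_of_measure_ne_zero (ENNReal.toReal_pos_iff.1 hSpos).1.ne'
  have hU : {x' | infDist x' S < r} = thickening r S := by
    ext x; exact (mem_thickening_iff_infDist_lt hS).symm
  have hzero : ∀ x ∈ closure S, (h1 - h2) x = 0 := fun x hx => sub_eq_zero.2 (heq x hx)
  have hpos : ∀ x, 0 < infDist x S → infDist x S < 1 → 0 < (h1 - h2) x := fun x hd0 hd1 =>
    (by positivity : 0 < c2 * infDist x S ^ 2).trans_le (hlow x hd0 hd1)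
  have hlim := tendsto_rpow_mul_setIntegral_add_rpow_neg (μ := volume) (sub_pos.2 hp)
    isOpen_thickening.measurableSet hSb.thickening.measure_lt_top.ne (hh1.sub hh2).measurable
    fun x hx => nonneg_of_infDist_lt_one hS hzero hpos
      (((mem_thickening_iff_infDist_lt hS).1 hx).trans hr.2)
  rw [thickening_inter_setOf_eq_zero_eq_closure hS hzero hpos hr.1 hr.2.le, measureReal_def,
    measure_closure_of_null_frontier (hSc.addHaar_frontier volume)] at hlim
  rw [hU]
  convert hlim.div_const (volume S).toReal using 2 with ε
  · simp only [neg_sub, Pi.sub_apply, add_sub_assoc]; ring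
  · exact (div_self hSpos.ne').symm

/-- Lemma 3.2 (flat case): the scaled integral of `δ(x')^{1-p}` over `{d(x') < r}`
tends to `1` as `ε → 0⁺`. -/
theorem flat_boundary_scaled_integral_tendsto_one
    {n : ℕ} (hn : 2 ≤ n) (p : ℝ) (hp : 1 < p) (r : ℝ) (hr : r ∈ Ioo (0:ℝ) 1)
    (S : Set (EuclideanSpace ℝ (Fin (n-1))))
    (hSo : IsOpen S) (hSb : Bornology.IsBounded S) (hSc : Convex ℝ S)
    (hS0 : (0 : EuclideanSpace ℝ (Fin (n-1))) ∈ S)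
    (hSpos : 0 < (volume S).toReal)
    (c1 c2 : ℝ) (hc2 : 0 < c2) (hc12 : c2 ≤ c1)
    (h1 h2 : EuclideanSpace ℝ (Fin (n-1)) → ℝ)
    (hh1 : Continuous h1) (hh2 : Continuous h2)
    (heq : ∀ x' ∈ closure S, h1 x' = h2 x')
    (hlow : ∀ x', 0 < infDist x' S → infDist x' S < 1 →
      c2 * (infDist x' S) ^ 2 ≤ h1 x' - h2 x')
    (hupp : ∀ x', 0 < infDist x' S → infDist x' S < 1 →
      h1 x' - h2 x' ≤ c1 * (infDist x' S) ^ 2) :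
    Tendsto (fun ε : ℝ =>
      ε ^ (p - 1) / (volume S).toReal *
        ∫ x' in {x' : EuclideanSpace ℝ (Fin (n-1)) | infDist x' S < r},
          (ε + h1 x' - h2 x') ^ (1 - p))
      (nhdsWithin 0 (Ioi 0)) (nhds 1) :=
  flat_boundary_scaled_integral_tendsto_one_general p hp r hr S hSb hSc hSpos c2 hc2 h1 h2 hh1 hh2
    heq hlow
end

section
/- Let n ≥ 2 be an integer, γ ∈ (0,1), p = (n+γ)/(1+γ) (so that p−1 = (n−1)/(1+γ)), r ∈ (0,1), and c0 > 1. Let a : ℝ^{n−1} → ℝ be a measurable function with 1/c0 ≤ a(x') ≤ c0 for all |x'| < r. Define K := (1+γ)·Γ((n−1)/2)/(2π^{(n−1)/2}), and for ε ∈ (0,1) set I(ε) := |ln ε|^{−1} · ∫_{{|x'|<r}} (ε + a(x')|x'|^{1+γ})^{−(n−1)/(1+γ)} dx'. Then c0^{−(n−1)/(1+γ)}/K ≤ liminf_{ε→0⁺} I(ε) ≤ limsup_{ε→0⁺} I(ε) ≤ c0^{(n−1)/(1+γ)}/K. -/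
/-!
Write `M = n - 1` and `β = 1 + γ`. Since `c0⁻¹ ≤ a ≤ c0` and `t ↦ (ε + t) ^ (-M / β)` is
decreasing, the integral is squeezed between the same integrals with `a` replaced by the constants
`c0` and `c0⁻¹`. For a constant `c`, polar coordinates turn it into
`σ ∫₀ʳ y ^ (M - 1) (ε + c y ^ β) ^ (-M / β) dy` with `σ = 2 π ^ (M / 2) / Γ (M / 2)`. At the
critical exponent the integrand is `c ^ (-M / β) / y` up to a factor tending to `1` wherever
`ε ≪ c y ^ β`, while `y ≲ ε ^ (1 / β)` contributes `O(1)`; so the integral is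
`c ^ (-M / β) |log ε| / β + o(|log ε|)`.
-/

open MeasureTheory Filter Set Topology

section RadialProfile

open Real intervalIntegral

noncomputable def radialIntegrand (β M c ε y : ℝ) : ℝ :=
  y ^ (M - 1) * (ε + c * y ^ β) ^ (-(M / β))

variable {β M c ε r s : ℝ}

lemma rpow_sub_one_mul_mul_rpow_neg_div (hβ : β ≠ 0) (hc : 0 < c) {y : ℝ} (hy : 0 < y) :
    y ^ (M - 1) * (c * y ^ β) ^ (-(M / β)) = c ^ (-(M / β)) * y⁻¹ := by
  rw [mul_rpow hc.le (rpow_nonneg hy.le _), ← rpow_mul hy.le, mul_left_comm, ← rpow_add hy,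
    show M - 1 + β * -(M / β) = -1 by field_simp; ring, rpow_neg_one]

lemma intervalIntegrable_radialIntegrand (hβ : 0 < β) (hM : 0 < M) (hc : 0 ≤ c) (hε : 0 < ε)
    {a b : ℝ} (ha : 0 ≤ a) (hb : 0 ≤ b) :
    IntervalIntegrable (radialIntegrand β M c ε) volume a b := by
  refine (intervalIntegrable_rpow' (by linarith)).mul_continuousOn
    (ContinuousOn.rpow_const (continuous_const.add
      (continuous_const.mul (continuous_rpow_const hβ.le))).continuousOn fun y hy => Or.inl ?_)
  have : 0 ≤ c * y ^ β := mul_nonneg hc (rpow_nonneg ((le_inf ha hb).trans hy.1) _)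
  positivity

lemma integral_radialIntegrand_le (hβ : 0 < β) (hM : 0 < M) (hc : 0 < c) (hε : 0 < ε)
    (hs : 0 < s) (hsr : s ≤ r) :
    ∫ y in 0..r, radialIntegrand β M c ε y ≤
      ε ^ (-(M / β)) * s ^ M / M + c ^ (-(M / β)) * log (r / s) := by
  have hq : -(M / β) ≤ 0 := neg_nonpos.2 (div_pos hM hβ).le
  have hint : ∀ {a b}, 0 ≤ a → 0 ≤ b → IntervalIntegrable (radialIntegrand β M c ε) volume a b :=
    intervalIntegrable_radialIntegrand hβ hM hc.le hε
  rw [← integral_add_adjacent_intervals (hint le_rfl hs.le) (hint hs.le (hs.le.trans hsr))]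
  gcongr
  · calc ∫ y in 0..s, radialIntegrand β M c ε y ≤ ∫ y in 0..s, ε ^ (-(M / β)) * y ^ (M - 1) := by
          refine integral_mono_on hs.le (hint le_rfl hs.le)
            ((intervalIntegrable_rpow' (by linarith)).const_mul _) fun y hy => ?_
          rw [radialIntegrand, mul_comm (ε ^ _)]
          exact mul_le_mul_of_nonneg_left (rpow_le_rpow_of_nonpos hε
            (le_add_of_nonneg_right (mul_nonneg hc.le (rpow_nonneg hy.1 _))) hq)
            (rpow_nonneg hy.1 _)
      _ = ε ^ (-(M / β)) * s ^ M / M := by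
          rw [intervalIntegral.integral_const_mul, integral_rpow (Or.inl (by linarith)),
            sub_add_cancel, zero_rpow hM.ne', sub_zero, mul_div_assoc]
  · calc ∫ y in s..r, radialIntegrand β M c ε y ≤ ∫ y in s..r, c ^ (-(M / β)) * y⁻¹ := by
          refine integral_mono_on hsr (hint hs.le (hs.le.trans hsr))
            ((intervalIntegrable_inv (fun y hy => ?_) continuousOn_id).const_mul _) fun y hy => ?_
          · rw [uIcc_of_le hsr] at hy
            exact (hs.trans_le hy.1).ne'
          have hy0 : 0 < y := hs.trans_le hy.1
          rw [radialIntegrand, ← rpow_sub_one_mul_mul_rpow_neg_div hβ.ne' hc hy0]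
          exact mul_le_mul_of_nonneg_left (rpow_le_rpow_of_nonpos (by positivity)
            (le_add_of_nonneg_left hε.le) hq) (rpow_nonneg hy0.le _)
      _ = c ^ (-(M / β)) * log (r / s) := by
          rw [intervalIntegral.integral_const_mul, integral_inv_of_pos hs (hs.trans_le hsr)]

lemma le_integral_radialIntegrand (hβ : 0 < β) (hM : 0 < M) (hc : 0 < c) (hε : 0 < ε)
    (hs : 0 < s) (hsr : s ≤ r) :
    (c + ε / s ^ β) ^ (-(M / β)) * log (r / s) ≤ ∫ y in 0..r, radialIntegrand β M c ε y := by
  have hq : -(M / β) ≤ 0 := neg_nonpos.2 (div_pos hM hβ).le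
  have hint : ∀ {a b}, 0 ≤ a → 0 ≤ b → IntervalIntegrable (radialIntegrand β M c ε) volume a b :=
    intervalIntegrable_radialIntegrand hβ hM hc.le hε
  have hsβ : 0 < s ^ β := rpow_pos_of_pos hs β
  have hinit : 0 ≤ ∫ y in 0..s, radialIntegrand β M c ε y :=
    integral_nonneg hs.le fun y hy => mul_nonneg (rpow_nonneg hy.1 _)
      (rpow_nonneg (add_nonneg hε.le (mul_nonneg hc.le (rpow_nonneg hy.1 _))) _)
  have htail : ∫ y in s..r, (c + ε / s ^ β) ^ (-(M / β)) * y⁻¹ ≤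
      ∫ y in s..r, radialIntegrand β M c ε y := by
    refine integral_mono_on hsr
      ((intervalIntegrable_inv (fun y hy => ?_) continuousOn_id).const_mul _)
      (hint hs.le (hs.le.trans hsr)) fun y hy => ?_
    · rw [uIcc_of_le hsr] at hy
      exact (hs.trans_le hy.1).ne'
    have hy0 : 0 < y := hs.trans_le hy.1
    have hsy : s ^ β ≤ y ^ β := rpow_le_rpow hs.le hy.1 hβ.le
    have hbase : ε + c * y ^ β ≤ (c + ε / s ^ β) * y ^ β := by
      have : ε ≤ ε / s ^ β * y ^ β := by
        rw [div_mul_eq_mul_div, le_div_iff₀ hsβ]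
        exact mul_le_mul_of_nonneg_left hsy hε.le
      linarith
    rw [radialIntegrand, ← rpow_sub_one_mul_mul_rpow_neg_div hβ.ne' (by positivity) hy0]
    exact mul_le_mul_of_nonneg_left (rpow_le_rpow_of_nonpos (by positivity) hbase hq)
      (rpow_nonneg hy0.le _)
  rw [intervalIntegral.integral_const_mul, integral_inv_of_pos hs (hs.trans_le hsr)] at htail
  rw [← integral_add_adjacent_intervals (hint le_rfl hs.le) (hint hs.le (hs.le.trans hsr))]
  exact le_add_of_nonneg_of_le hinit htail

lemma integral_radialIntegrand_le_neg_log (hβ : 0 < β) (hM : 0 < M) (hc : 0 < c) (hε : 0 < ε)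
    (hεr : ε ≤ c * r ^ β) (hr : 0 < r) :
    ∫ y in 0..r, radialIntegrand β M c ε y ≤
      c ^ (-(M / β)) * (M⁻¹ + log r + β⁻¹ * log c) + c ^ (-(M / β)) * β⁻¹ * -log ε := by
  have hεc : 0 < ε / c := div_pos hε hc
  -- split where `ε = c s ^ β`, the crossing point of the two bounds on the integrand
  have hsr : (ε / c) ^ β⁻¹ ≤ r := by
    rw [rpow_inv_le_iff_of_pos hεc.le hr.le hβ, div_le_iff₀ hc, mul_comm]
    exact hεr
  refine (integral_radialIntegrand_le hβ hM hc hε (rpow_pos_of_pos hεc _) hsr).trans_eq ?_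
  rw [← rpow_mul hεc.le, inv_mul_eq_div, div_rpow hε.le hc.le, log_div hr.ne' (by positivity),
    log_rpow hεc, log_div hε.ne' hc.ne', rpow_neg hε.le, rpow_neg hc.le]
  have : ε ^ (M / β) ≠ 0 := (rpow_pos_of_pos hε _).ne'
  field_simp
  ring

lemma neg_log_le_integral_radialIntegrand (hβ : 0 < β) (hM : 0 < M) (hc : 0 < c) (hε : 0 < ε)
    (hε1 : ε < 1) (hεr : ε * -log ε ≤ r ^ β) (hr : 0 < r) :
    (c + (-log ε)⁻¹) ^ (-(M / β)) * (log r + β⁻¹ * -log ε - β⁻¹ * log (-log ε)) ≤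
      ∫ y in 0..r, radialIntegrand β M c ε y := by
  have ht : 0 < -log ε := neg_pos.2 (log_neg hε hε1)
  have hx : 0 < ε * -log ε := mul_pos hε ht
  -- split at `s ^ β = ε |log ε|`: then `ε / s ^ β → 0` while `log (r / s) ~ |log ε| / β`
  have hsr : (ε * -log ε) ^ β⁻¹ ≤ r := (rpow_inv_le_iff_of_pos hx.le hr.le hβ).2 hεr
  refine le_trans (le_of_eq ?_)
    (le_integral_radialIntegrand hβ hM hc hε (rpow_pos_of_pos hx _) hsr)
  rw [rpow_inv_rpow hx.le hβ.ne', div_mul_cancel_left₀ hε.ne', log_div hr.ne' (by positivity),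
    log_rpow hx, log_mul hε.ne' ht.ne']
  ring

lemma tendsto_inv_mul_add_mul_sub_mul_log (A B C : ℝ) :
    Tendsto (fun t => t⁻¹ * (A + B * t - C * log t)) atTop (𝓝 B) := by
  have hlog : Tendsto (fun t => log t / t) atTop (𝓝 0) := by
    simpa using isLittleO_log_id_atTop.tendsto_div_nhds_zero
  have h := ((tendsto_inv_atTop_zero.const_mul A).add_const B).sub (hlog.const_mul C)
  rw [mul_zero, zero_add, mul_zero, sub_zero] at h
  refine h.congr' ?_
  filter_upwards [eventually_gt_atTop 0] with t ht
  field_simp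

theorem tendsto_neg_log_inv_mul_integral_radialIntegrand (hβ : 0 < β) (hM : 0 < M) (hc : 0 < c)
    (hr : 0 < r) :
    Tendsto (fun ε => (-log ε)⁻¹ * ∫ y in 0..r, radialIntegrand β M c ε y) (𝓝[>] 0)
      (𝓝 (c ^ (-(M / β)) / β)) := by
  have hT : Tendsto (fun ε => -log ε) (𝓝[>] 0) atTop :=
    tendsto_neg_atTop_iff.2 tendsto_log_nhdsGT_zero
  have hlower : Tendsto (fun t => (c + t⁻¹) ^ (-(M / β)) * (t⁻¹ * (log r + β⁻¹ * t - β⁻¹ * log t)))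
      atTop (𝓝 (c ^ (-(M / β)) * β⁻¹)) := by
    refine Tendsto.mul ?_ (tendsto_inv_mul_add_mul_sub_mul_log _ _ _)
    simpa using ((tendsto_inv_atTop_zero.const_add c).rpow_const (Or.inl (by simpa using hc.ne')))
  have hupper : Tendsto
      (fun t => t⁻¹ * (c ^ (-(M / β)) * (M⁻¹ + log r + β⁻¹ * log c) + c ^ (-(M / β)) * β⁻¹ * t))
      atTop (𝓝 (c ^ (-(M / β)) * β⁻¹)) := by
    simpa using tendsto_inv_mul_add_mul_sub_mul_log
      (c ^ (-(M / β)) * (M⁻¹ + log r + β⁻¹ * log c)) (c ^ (-(M / β)) * β⁻¹) 0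
  have hεt : Tendsto (fun ε => ε * -log ε) (𝓝[>] 0) (𝓝 0) := by
    simpa using (continuous_mul_log.tendsto 0).neg.mono_left nhdsWithin_le_nhds
  have hcr : ∀ᶠ ε in 𝓝[>] (0 : ℝ), ε ≤ c * r ^ β :=
    nhdsWithin_le_nhds (ge_mem_nhds (by positivity))
  have hrβ : ∀ᶠ ε in 𝓝[>] (0 : ℝ), ε * -log ε ≤ r ^ β :=
    hεt.eventually (ge_mem_nhds (by positivity))
  rw [div_eq_mul_inv]
  refine tendsto_of_tendsto_of_tendsto_of_le_of_le' (hlower.comp hT) (hupper.comp hT) ?_ ?_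
  · filter_upwards [Ioo_mem_nhdsGT one_pos, hrβ] with ε ⟨hε, hε1⟩ hεr
    have ht : 0 ≤ (-log ε)⁻¹ := inv_nonneg.2 (neg_nonneg.2 (log_nonpos hε.le hε1.le))
    rw [Function.comp_apply, mul_left_comm]
    exact mul_le_mul_of_nonneg_left
      (neg_log_le_integral_radialIntegrand hβ hM hc hε hε1 hεr hr) ht
  · filter_upwards [Ioo_mem_nhdsGT one_pos, hcr] with ε ⟨hε, hε1⟩ hεr
    have ht : 0 ≤ (-log ε)⁻¹ := inv_nonneg.2 (neg_nonneg.2 (log_nonpos hε.le hε1.le))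
    exact mul_le_mul_of_nonneg_left (integral_radialIntegrand_le_neg_log hβ hM hc hε hεr hr) ht

end RadialProfile

section PolarCoordinates

open Metric Module

variable {E : Type*} [NormedAddCommGroup E] [NormedSpace ℝ E] [FiniteDimensional ℝ E]
  [MeasurableSpace E] [BorelSpace E] [Nontrivial E] (μ : Measure E) [μ.IsAddHaarMeasure]

theorem setIntegral_ball_fun_norm (f : ℝ → ℝ) {r : ℝ} (hr : 0 ≤ r) :
    ∫ x in ball (0 : E) r, f ‖x‖ ∂μ =
      finrank ℝ E * μ.real (ball 0 1) * ∫ y in 0..r, y ^ (finrank ℝ E - 1) * f y := by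
  have hball : ball (0 : E) r = (‖·‖) ⁻¹' Iio r := by ext; simp
  calc ∫ x in ball (0 : E) r, f ‖x‖ ∂μ = ∫ x, (Iio r).indicator f ‖x‖ ∂μ := by
        rw [← integral_indicator measurableSet_ball, hball]; rfl
    _ = finrank ℝ E * μ.real (ball 0 1) *
        ∫ y in Ioi 0, (Iio r).indicator (fun y => y ^ (finrank ℝ E - 1) * f y) y := by
        rw [integral_fun_norm_addHaar μ, nsmul_eq_mul, smul_eq_mul, mul_assoc]
        congr 2
        refine integral_congr_ae (ae_of_all _ fun y => ?_)
        by_cases hy : y < r <;> simp [hy]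
    _ = _ := by
        rw [setIntegral_indicator measurableSet_Iio, Ioi_inter_Iio,
          intervalIntegral.integral_of_le hr, integral_Ioc_eq_integral_Ioo]

end PolarCoordinates

section Comparison

open Metric

variable {E : Type*} [NormedAddCommGroup E] [MeasurableSpace E] [BorelSpace E] [ProperSpace E]
  {μ : Measure E} [IsFiniteMeasureOnCompacts μ] {β q ε r : ℝ}

lemma integrableOn_ball_rpow_neg (hq : 0 ≤ q) (hε : 0 < ε) {b : E → ℝ} (hb : Measurable b)
    (hb0 : ∀ x ∈ ball (0 : E) r, 0 ≤ b x) :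
    IntegrableOn (fun x => (ε + b x * ‖x‖ ^ β) ^ (-q)) (ball 0 r) μ := by
  refine Measure.integrableOn_of_bounded (M := ε ^ (-q)) measure_ball_lt_top.ne
    ((measurable_const.add (hb.mul (measurable_norm.pow_const β))).pow_const
      (-q)).aestronglyMeasurable ?_
  filter_upwards [ae_restrict_mem measurableSet_ball] with x hx
  have hbase : ε ≤ ε + b x * ‖x‖ ^ β :=
    le_add_of_nonneg_right (mul_nonneg (hb0 x hx) (Real.rpow_nonneg (norm_nonneg _) _))
  rw [Real.norm_of_nonneg (Real.rpow_nonneg (hε.le.trans hbase) _)]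
  exact Real.rpow_le_rpow_of_nonpos hε hbase (neg_nonpos.2 hq)

lemma setIntegral_ball_rpow_neg_le_of_le (hq : 0 ≤ q) (hε : 0 < ε) {b₁ b₂ : E → ℝ}
    (hb₁ : Measurable b₁) (hb₂ : Measurable b₂) (hb₁0 : ∀ x ∈ ball (0 : E) r, 0 ≤ b₁ x)
    (hb₁₂ : ∀ x ∈ ball (0 : E) r, b₁ x ≤ b₂ x) :
    ∫ x in ball 0 r, (ε + b₂ x * ‖x‖ ^ β) ^ (-q) ∂μ ≤
      ∫ x in ball 0 r, (ε + b₁ x * ‖x‖ ^ β) ^ (-q) ∂μ := by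
  refine setIntegral_mono_on
    (integrableOn_ball_rpow_neg hq hε hb₂ fun x hx => (hb₁0 x hx).trans (hb₁₂ x hx))
    (integrableOn_ball_rpow_neg hq hε hb₁ hb₁0) measurableSet_ball fun x hx => ?_
  have hnorm : 0 ≤ ‖x‖ ^ β := Real.rpow_nonneg (norm_nonneg _) _
  exact Real.rpow_le_rpow_of_nonpos (by nlinarith [hb₁0 x hx])
    (by nlinarith [hb₁₂ x hx]) (neg_nonpos.2 hq)

end Comparison

lemma le_liminf_le_limsup_le_of_tendsto_of_le {α : Type*} {l : Filter α} [l.NeBot]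
    {f g h : α → ℝ} {a b : ℝ} (hf : Tendsto f l (𝓝 a)) (hh : Tendsto h l (𝓝 b))
    (hfg : f ≤ᶠ[l] g) (hgh : g ≤ᶠ[l] h) :
    a ≤ liminf g l ∧ liminf g l ≤ limsup g l ∧ limsup g l ≤ b := by
  have hbdd : IsBoundedUnder (· ≤ ·) l g := hh.isBoundedUnder_le.mono_le hgh
  have hbdd' : IsBoundedUnder (· ≥ ·) l g := hf.isBoundedUnder_ge.mono_ge hfg
  refine ⟨?_, liminf_le_limsup hbdd hbdd', ?_⟩
  · exact hf.liminf_eq ▸ liminf_le_liminf hfg hf.isBoundedUnder_ge hbdd.isCoboundedUnder_ge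
  · exact hh.limsup_eq ▸ limsup_le_limsup hgh hbdd'.isCoboundedUnder_le hh.isBoundedUnder_le

section Euclidean

open Metric Module Real

variable {E : Type*} [NormedAddCommGroup E] [InnerProductSpace ℝ E] [FiniteDimensional ℝ E]
  [MeasurableSpace E] [BorelSpace E] [Nontrivial E]

theorem finrank_mul_volume_real_ball_one :
    finrank ℝ E * volume.real (ball (0 : E) 1) =
      2 * π ^ ((finrank ℝ E : ℝ) / 2) / Gamma ((finrank ℝ E : ℝ) / 2) := by
  have hd : (0 : ℝ) < finrank ℝ E := Nat.cast_pos.2 finrank_pos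
  have hsqrt : √π ^ finrank ℝ E = π ^ ((finrank ℝ E : ℝ) / 2) := by
    rw [sqrt_eq_rpow, ← rpow_natCast, ← rpow_mul pi_pos.le, one_div_mul_eq_div]
  rw [Measure.real, InnerProductSpace.volume_ball, ENNReal.ofReal_one, one_pow, one_mul,
    ENNReal.toReal_ofReal (by positivity), hsqrt, Gamma_add_one (by positivity)]
  field_simp

theorem setIntegral_ball_rpow_eq_integral_radialIntegrand {β c ε r : ℝ} (hr : 0 ≤ r) :
    ∫ x in ball (0 : E) r, (ε + c * ‖x‖ ^ β) ^ (-(finrank ℝ E / β)) =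
      2 * π ^ ((finrank ℝ E : ℝ) / 2) / Gamma ((finrank ℝ E : ℝ) / 2) *
        ∫ y in 0..r, radialIntegrand β (finrank ℝ E) c ε y := by
  refine (setIntegral_ball_fun_norm volume
    (fun y => (ε + c * y ^ β) ^ (-(finrank ℝ E / β))) hr).trans ?_
  rw [finrank_mul_volume_real_ball_one]
  congr with y
  rw [radialIntegrand, ← rpow_natCast, Nat.cast_sub finrank_pos, Nat.cast_one]

theorem tendsto_abs_log_inv_mul_setIntegral_ball {β c r : ℝ} (hβ : 0 < β) (hc : 0 < c)
    (hr : 0 < r) :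
    Tendsto (fun ε => |log ε|⁻¹ * ∫ x in ball (0 : E) r, (ε + c * ‖x‖ ^ β) ^ (-(finrank ℝ E / β)))
      (𝓝[>] 0) (𝓝 (c ^ (-(finrank ℝ E / β)) /
        (β * Gamma ((finrank ℝ E : ℝ) / 2) / (2 * π ^ ((finrank ℝ E : ℝ) / 2))))) := by
  have hd : (0 : ℝ) < finrank ℝ E := Nat.cast_pos.2 finrank_pos
  have hlim := (tendsto_neg_log_inv_mul_integral_radialIntegrand hβ hd hc hr).const_mul
    (2 * π ^ ((finrank ℝ E : ℝ) / 2) / Gamma ((finrank ℝ E : ℝ) / 2))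
  have hΓ := Gamma_pos_of_pos (half_pos hd)
  rw [show ∀ x : ℝ, 2 * π ^ ((finrank ℝ E : ℝ) / 2) / Gamma ((finrank ℝ E : ℝ) / 2) * (x / β) =
      x / (β * Gamma ((finrank ℝ E : ℝ) / 2) / (2 * π ^ ((finrank ℝ E : ℝ) / 2))) by
    intro x; field_simp] at hlim
  refine hlim.congr' ?_
  filter_upwards [Ioo_mem_nhdsGT one_pos] with ε hε
  rw [setIntegral_ball_rpow_eq_integral_radialIntegrand hr.le, abs_of_neg (log_neg hε.1 hε.2)]
  ring

theorem le_liminf_le_limsup_le_abs_log_inv_mul_setIntegral_ball {β r c₁ c₂ : ℝ} (hβ : 0 < β)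
    (hr : 0 < r) (hc₁ : 0 < c₁) {b : E → ℝ} (hb : Measurable b)
    (hbc : ∀ x ∈ ball (0 : E) r, b x ∈ Icc c₁ c₂) :
    let K := β * Gamma ((finrank ℝ E : ℝ) / 2) / (2 * π ^ ((finrank ℝ E : ℝ) / 2))
    let F := fun ε => |log ε|⁻¹ * ∫ x in ball (0 : E) r, (ε + b x * ‖x‖ ^ β) ^ (-(finrank ℝ E / β))
    c₂ ^ (-(finrank ℝ E / β)) / K ≤ liminf F (𝓝[>] 0) ∧
      liminf F (𝓝[>] 0) ≤ limsup F (𝓝[>] 0) ∧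
      limsup F (𝓝[>] 0) ≤ c₁ ^ (-(finrank ℝ E / β)) / K := by
  intro K F
  have hq : 0 ≤ (finrank ℝ E : ℝ) / β := by positivity
  have hc₂ : 0 < c₂ :=
    hc₁.trans_le ((hbc 0 (mem_ball_self hr)).1.trans (hbc 0 (mem_ball_self hr)).2)
  have habs : ∀ ε : ℝ, 0 ≤ |log ε|⁻¹ := fun ε => inv_nonneg.2 (abs_nonneg _)
  refine le_liminf_le_limsup_le_of_tendsto_of_le
    (tendsto_abs_log_inv_mul_setIntegral_ball hβ hc₂ hr)
    (tendsto_abs_log_inv_mul_setIntegral_ball hβ hc₁ hr) ?_ ?_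
  · filter_upwards [self_mem_nhdsWithin] with ε (hε : 0 < ε)
    exact mul_le_mul_of_nonneg_left (setIntegral_ball_rpow_neg_le_of_le hq hε hb
      measurable_const (fun x hx => hc₁.le.trans (hbc x hx).1) fun x hx => (hbc x hx).2) (habs ε)
  · filter_upwards [self_mem_nhdsWithin] with ε (hε : 0 < ε)
    exact mul_le_mul_of_nonneg_left (setIntegral_ball_rpow_neg_le_of_le hq hε measurable_const
      hb (fun _ _ => hc₁.le) fun x hx => (hbc x hx).1) (habs ε)

end Euclidean

theorem liminf_limsup_scaled_integral_C1gamma_critical_general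
    {n : ℕ} (hn : 2 ≤ n) (γ r c0 : ℝ) (hγ : γ ∈ Ioo (0:ℝ) 1)
    (hr : r ∈ Ioo (0:ℝ) 1) (hc0 : 1 < c0)
    (a : EuclideanSpace ℝ (Fin (n-1)) → ℝ) (ha_meas : Measurable a)
    (ha : ∀ x' : EuclideanSpace ℝ (Fin (n-1)), ‖x'‖ < r → a x' ∈ Icc (c0⁻¹) c0) :
    let K : ℝ := (1 + γ) * Real.Gamma (((n:ℝ) - 1) / 2) /
      (2 * Real.pi ^ (((n:ℝ) - 1) / 2))
    let I : ℝ → ℝ := fun ε =>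
      |Real.log ε|⁻¹ *
        ∫ x' in {x' : EuclideanSpace ℝ (Fin (n-1)) | ‖x'‖ < r},
          (ε + a x' * ‖x'‖ ^ (1 + γ)) ^ (-(((n:ℝ) - 1) / (1 + γ)))
    c0 ^ (-(((n:ℝ) - 1) / (1 + γ))) / K ≤ liminf I (nhdsWithin 0 (Ioi 0)) ∧
      liminf I (nhdsWithin 0 (Ioi 0)) ≤ limsup I (nhdsWithin 0 (Ioi 0)) ∧
      limsup I (nhdsWithin 0 (Ioi 0)) ≤ c0 ^ (((n:ℝ) - 1) / (1 + γ)) / K := by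
  intro K I
  have : Nonempty (Fin (n - 1)) := ⟨⟨0, by omega⟩⟩
  have hd : (Module.finrank ℝ (EuclideanSpace ℝ (Fin (n - 1))) : ℝ) = (n : ℝ) - 1 := by
    rw [finrank_euclideanSpace_fin, Nat.cast_sub (by omega), Nat.cast_one]
  have hc0' : 0 < c0 := by linarith
  have hball : {x' : EuclideanSpace ℝ (Fin (n - 1)) | ‖x'‖ < r} = Metric.ball 0 r :=
    ext fun _ => mem_ball_zero_iff.symm
  have h := le_liminf_le_limsup_le_abs_log_inv_mul_setIntegral_ball (β := 1 + γ)
    (by linarith [hγ.1]) hr.1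
    (inv_pos.2 hc0') ha_meas fun x hx => ha x (mem_ball_zero_iff.1 hx)
  rw [hd, Real.inv_rpow hc0'.le, ← Real.rpow_neg hc0'.le, neg_neg] at h
  simpa only [I, hball] using h

/-- Lemma 4.1, critical case `p = (n+γ)/(1+γ)`. -/
theorem liminf_limsup_scaled_integral_C1gamma_critical
    {n : ℕ} (hn : 2 ≤ n) (γ p r c0 : ℝ) (hγ : γ ∈ Ioo (0:ℝ) 1)
    (hp : p = ((n:ℝ) + γ) / (1 + γ)) (hr : r ∈ Ioo (0:ℝ) 1) (hc0 : 1 < c0)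
    (a : EuclideanSpace ℝ (Fin (n-1)) → ℝ) (ha_meas : Measurable a)
    (ha : ∀ x' : EuclideanSpace ℝ (Fin (n-1)), ‖x'‖ < r → a x' ∈ Icc (c0⁻¹) c0) :
    let K : ℝ := (1 + γ) * Real.Gamma (((n:ℝ) - 1) / 2) /
      (2 * Real.pi ^ (((n:ℝ) - 1) / 2))
    let I : ℝ → ℝ := fun ε =>
      |Real.log ε|⁻¹ *
        ∫ x' in {x' : EuclideanSpace ℝ (Fin (n-1)) | ‖x'‖ < r},
          (ε + a x' * ‖x'‖ ^ (1 + γ)) ^ (-(((n:ℝ) - 1) / (1 + γ)))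
    c0 ^ (-(((n:ℝ) - 1) / (1 + γ))) / K ≤ liminf I (nhdsWithin 0 (Ioi 0)) ∧
      liminf I (nhdsWithin 0 (Ioi 0)) ≤ limsup I (nhdsWithin 0 (Ioi 0)) ∧
      limsup I (nhdsWithin 0 (Ioi 0)) ≤ c0 ^ (((n:ℝ) - 1) / (1 + γ)) / K :=
  liminf_limsup_scaled_integral_C1gamma_critical_general hn γ r c0 hγ hr hc0 a ha_meas ha
end

section
/- Let n ≥ 2 be an integer and γ ∈ (0,1). Then the function s ↦ s^{n−2}/(1+s^{1+γ})^{(n−1)/(1+γ)} − s^{γ}/(1+s^{1+γ}) is absolutely integrable on (0,∞), i.e., ∫_0^∞ | s^{n−2}/(1+s^{1+γ})^{(n−1)/(1+γ)} − s^{γ}/(1+s^{1+γ}) | ds < ∞. -/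
open MeasureTheory Set

/-!
Put `t = s^β / (1 + s^β)`. Then `s^m / (1 + s^β)^((m+1)/β) = s⁻¹ t^((m+1)/β)`, so for every
`m` these kernels decay like `s⁻¹`, and the difference of two of them is `s⁻¹ (t^p - t^p')`.
Since `1 - t^p = O(1 - t)` and `1 - t = 1 / (1 + s^β) ≤ s^(-β)`, the difference is
`O(s^(-1-β))` at infinity, while on `(0, 1]` both kernels lie in `[0, 1]`. The model
`s^γ / (1 + s^(1+γ))` is the kernel with `β = 1 + γ` and `m = γ`.
-/

theorem one_sub_rpow_le_max_mul_one_sub {t : ℝ} (p : ℝ) (ht0 : 0 ≤ t) (ht1 : t ≤ 1) :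
    1 - t ^ p ≤ max p 1 * (1 - t) := by
  rcases le_total p 1 with hp | hp
  · have := Real.self_le_rpow_of_le_one ht0 ht1 hp
    rw [max_eq_right hp]
    linarith
  · have bernoulli := one_add_mul_self_le_rpow_one_add (by linarith : (-1 : ℝ) ≤ t - 1) hp
    rw [add_sub_cancel] at bernoulli
    rw [max_eq_left hp]
    linarith

noncomputable def critKernel (β m s : ℝ) : ℝ :=
  s ^ m / (1 + s ^ β) ^ ((m + 1) / β)

section critKernel

variable {β m m' s : ℝ}

theorem critKernel_eq_inv_mul (hβ : β ≠ 0) (m : ℝ) (hs : 0 < s) :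
    critKernel β m s = s⁻¹ * (s ^ β / (1 + s ^ β)) ^ ((m + 1) / β) := by
  have hsβ : 0 < s ^ β := Real.rpow_pos_of_pos hs β
  rw [critKernel, Real.div_rpow hsβ.le (by positivity), ← Real.rpow_mul hs.le,
    mul_div_cancel₀ _ hβ, Real.rpow_add_one hs.ne']
  field_simp

theorem critKernel_mem_Icc (hβ : 0 < β) (hm : 0 ≤ m) (hs : s ∈ Ioc 0 1) :
    critKernel β m s ∈ Icc 0 1 := by
  obtain ⟨hs0, hs1⟩ := hs
  have hden : 1 ≤ (1 + s ^ β) ^ ((m + 1) / β) :=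
    Real.one_le_rpow (by linarith [Real.rpow_pos_of_pos hs0 β]) (by positivity)
  refine ⟨by unfold critKernel; positivity, ?_⟩
  rw [critKernel, div_le_one (by linarith)]
  exact (Real.rpow_le_one hs0.le hs1 hm).trans hden

theorem abs_critKernel_sub_le (hβ : 0 < β) (hm : -1 ≤ m) (hm' : -1 ≤ m') (hs : 0 < s) :
    |critKernel β m s - critKernel β m' s| ≤
      (max ((m + 1) / β) 1 + max ((m' + 1) / β) 1) * s ^ (-(1 + β)) := by
  set p := (m + 1) / β
  set p' := (m' + 1) / β
  have hsβ : 0 < s ^ β := Real.rpow_pos_of_pos hs β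
  set t := s ^ β / (1 + s ^ β) with ht
  have ht0 : 0 ≤ t := by positivity
  have ht1 : t ≤ 1 := (div_le_one (by linarith)).mpr (by linarith)
  have h1t : 1 - t ≤ s ^ (-β) := by
    rw [Real.rpow_neg hs.le, ht, one_sub_div (by linarith), add_sub_cancel_right, one_div]
    exact inv_anti₀ hsβ (by linarith)
  have hp : 0 ≤ p := div_nonneg (by linarith) hβ.le
  have hp' : 0 ≤ p' := div_nonneg (by linarith) hβ.le
  have hdiff : |t ^ p - t ^ p'| ≤ (max p 1 + max p' 1) * (1 - t) := by
    have h := one_sub_rpow_le_max_mul_one_sub p ht0 ht1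
    have h' := one_sub_rpow_le_max_mul_one_sub p' ht0 ht1
    have hle := Real.rpow_le_one ht0 ht1 hp
    have hle' := Real.rpow_le_one ht0 ht1 hp'
    rw [abs_le]
    constructor <;> linarith
  rw [critKernel_eq_inv_mul hβ.ne' m hs, critKernel_eq_inv_mul hβ.ne' m' hs, ← mul_sub, abs_mul,
    abs_of_pos (inv_pos.mpr hs), neg_add, Real.rpow_add hs, Real.rpow_neg_one]
  calc s⁻¹ * |t ^ p - t ^ p'| ≤ s⁻¹ * ((max p 1 + max p' 1) * s ^ (-β)) := by
        gcongr
        exact hdiff.trans (by gcongr)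
    _ = _ := by ring

theorem continuousOn_critKernel (β m : ℝ) : ContinuousOn (critKernel β m) (Ioi 0) := by
  intro s (hs : 0 < s)
  refine ContinuousAt.continuousWithinAt ?_
  unfold critKernel
  fun_prop (disch := first | exact .inl (by positivity) | positivity)

theorem integrableOn_critKernel_sub (hβ : 0 < β) (hm : 0 ≤ m) (hm' : 0 ≤ m') :
    IntegrableOn (fun s ↦ critKernel β m s - critKernel β m' s) (Ioi 0) := by
  have hmeas : AEStronglyMeasurable (fun s ↦ critKernel β m s - critKernel β m' s)
      (volume.restrict (Ioi 0)) :=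
    ((continuousOn_critKernel β m).sub (continuousOn_critKernel β m')).aestronglyMeasurable
      measurableSet_Ioi
  rw [← Ioc_union_Ioi_eq_Ioi zero_le_one]
  refine IntegrableOn.union ?_ ?_
  · refine .of_bound measure_Ioc_lt_top (hmeas.mono_set Ioc_subset_Ioi_self) 1 ?_
    filter_upwards [ae_restrict_mem measurableSet_Ioc] with s hs
    obtain ⟨h0, h1⟩ := critKernel_mem_Icc hβ hm hs
    obtain ⟨h0', h1'⟩ := critKernel_mem_Icc hβ hm' hs
    exact abs_sub_le_of_nonneg_of_le h0 h1 h0' h1'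
  · have hdecay : IntegrableOn (fun s : ℝ ↦ s ^ (-(1 + β))) (Ioi 1) :=
      integrableOn_Ioi_rpow_of_lt (by linarith) one_pos
    refine Integrable.mono' (hdecay.const_mul (max ((m + 1) / β) 1 + max ((m' + 1) / β) 1))
      (hmeas.mono_set (Ioi_subset_Ioi zero_le_one)) ?_
    filter_upwards [ae_restrict_mem measurableSet_Ioi] with s (hs : 1 < s)
    exact abs_critKernel_sub_le hβ (by linarith) (by linarith) (by linarith : (0 : ℝ) < s)

end critKernel

/-- The term II in the proof of Lemma 4.1 (critical case): the difference between the
critical-case integrand and its logarithmic model is absolutely integrable on `(0, ∞)`. -/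
theorem integrableOn_critical_integrand_sub_model
    {n : ℕ} (hn : 2 ≤ n) (γ : ℝ) (hγ : γ ∈ Ioo (0:ℝ) 1) :
    IntegrableOn
      (fun s : ℝ =>
        s ^ ((n:ℝ) - 2) / (1 + s ^ (1 + γ)) ^ (((n:ℝ) - 1) / (1 + γ)) -
          s ^ γ / (1 + s ^ (1 + γ)))
      (Ioi 0) := by
  obtain ⟨hγ0, -⟩ := hγ
  have hn2 : (0 : ℝ) ≤ n - 2 := by
    rw [sub_nonneg]
    exact_mod_cast hn
  have hpn : ((n : ℝ) - 2 + 1) / (1 + γ) = ((n : ℝ) - 1) / (1 + γ) := by ring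
  have hpγ : (γ + 1) / (1 + γ) = 1 := by rw [add_comm]; exact div_self (by linarith)
  convert integrableOn_critKernel_sub (β := 1 + γ) (m := n - 2) (m' := γ) (by linarith) hn2
    hγ0.le using 2 with s
  simp only [critKernel, hpn, hpγ, Real.rpow_one]
end

section
/- Let n ≥ 2 be an integer, p > 1, and r > 0. Then there exist constants c > 0 and ε0 ∈ (0,1), depending only on n, p, and r, such that for all ε ∈ (0, ε0): ∫_0^r s^{n−2}/(ε+s²)^{p−1} ds ≥ c·ε^{(n+1)/2−p} if p > (n+1)/2; ∫_0^r s^{n−2}/(ε+s²)^{p−1} ds ≥ c·|ln ε| if p = (n+1)/2; and ∫_0^r s^{n−2}/(ε+s²)^{p−1} ds ≥ c if 1 < p < (n+1)/2. -/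
/-! On `[0, √ε]` the denominator is at most `(2ε)^(p-1)`, so the integral is at least a multiple
of `ε^((n-1)/2 - (p-1))`. On `[√ε, r]` it is at most `(2s²)^(p-1)`, which in the critical case
`2(p-1) = n-1` bounds the integrand below by a multiple of `1/s`, hence the integral by a multiple
of `log (r/√ε) ≥ |log ε|/4`. For `ε ≤ 1` the integral dominates its value at `ε = 1`. -/

open MeasureTheory Set intervalIntegral Real

theorem integral_le_integral_of_le_on_subinterval {f g : ℝ → ℝ} {a b c d : ℝ}
    (hca : c ≤ a) (hab : a ≤ b) (hbd : b ≤ d)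
    (hg : IntervalIntegrable g volume a b) (hf : IntervalIntegrable f volume c d)
    (hf_nonneg : ∀ x ∈ Icc c d, 0 ≤ f x) (hgf : ∀ x ∈ Icc a b, g x ≤ f x) :
    ∫ x in a..b, g x ≤ ∫ x in c..d, f x :=
  (integral_mono_on hab hg (hf.mono_set (uIcc_subset_uIcc (Icc_subset_uIcc ⟨hca, hab.trans hbd⟩)
      (Icc_subset_uIcc ⟨hca.trans hab, hbd⟩))) hgf).trans <|
    integral_mono_interval hca hab hbd
      ((ae_restrict_mem measurableSet_Ioc).mono fun x hx => hf_nonneg x (Ioc_subset_Icc_self hx)) hf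

section

variable {m : ℕ} {p ε δ r : ℝ}

theorem continuous_pow_div_add_sq_rpow (hε : 0 < ε) (m : ℕ) (p : ℝ) :
    Continuous fun s : ℝ => s ^ m / (ε + s ^ 2) ^ (p - 1) :=
  (continuous_pow m).div ((continuous_const.add (continuous_pow 2)).rpow_const
    fun s => Or.inl (ne_of_gt (by positivity : 0 < ε + s ^ 2))) fun s => by positivity

theorem rpow_div_le_integral_pow_div_add_sq_rpow (hp : 1 ≤ p) (hε : 0 < ε) (hεr : √ε ≤ r) :
    ε ^ (((m : ℝ) + 1) / 2 - (p - 1)) / ((m + 1) * 2 ^ (p - 1)) ≤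
      ∫ s in (0:ℝ)..r, s ^ m / (ε + s ^ 2) ^ (p - 1) := by
  have h_int : ∫ s in (0:ℝ)..√ε, s ^ m / (2 * ε) ^ (p - 1) =
      ε ^ (((m : ℝ) + 1) / 2 - (p - 1)) / ((m + 1) * 2 ^ (p - 1)) := by
    rw [intervalIntegral.integral_div, integral_pow, sqrt_eq_rpow, ← rpow_natCast, ← rpow_mul hε.le,
      rpow_sub hε, mul_rpow zero_le_two hε.le]
    push_cast
    field_simp
    ring_nf
  rw [← h_int]
  refine integral_le_integral_of_le_on_subinterval le_rfl (sqrt_nonneg ε) hεr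
    (((continuous_pow m).div_const _).intervalIntegrable _ _)
    ((continuous_pow_div_add_sq_rpow hε m p).intervalIntegrable _ _)
    (fun x hx => by have := hx.1; positivity) fun x hx => ?_
  have hx2 : x ^ 2 ≤ ε := (sq_le_sq₀ hx.1 (sqrt_nonneg ε)).2 hx.2 |>.trans_eq (sq_sqrt hε.le)
  have hx0 := hx.1
  gcongr
  linarith

theorem rpow_mul_log_le_integral_pow_div_add_sq_rpow (hp : 2 * (p - 1) = m + 1) (hε : 0 < ε)
    (hεr : √ε ≤ r) :
    2 ^ (1 - p) * log (r / √ε) ≤ ∫ s in (0:ℝ)..r, s ^ m / (ε + s ^ 2) ^ (p - 1) := by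
  have hsqrt : 0 < √ε := sqrt_pos.2 hε
  have hp1 : 0 ≤ p - 1 := by linarith
  rw [← integral_inv_of_pos hsqrt (hsqrt.trans_le hεr), ← intervalIntegral.integral_const_mul]
  refine integral_le_integral_of_le_on_subinterval hsqrt.le hεr le_rfl
    ((continuousOn_const.mul (continuousOn_inv₀.mono fun x hx => ?_)).intervalIntegrable)
    ((continuous_pow_div_add_sq_rpow hε m p).intervalIntegrable _ _)
    (fun x hx => by have := hx.1; positivity) fun x hx => ?_
  · rw [uIcc_of_le hεr] at hx
    exact (hsqrt.trans_le hx.1).ne'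
  have hεx : ε ≤ x ^ 2 := by
    simpa [sq_sqrt hε.le] using pow_le_pow_left₀ hsqrt.le hx.1 2
  replace hx : 0 < x := hsqrt.trans_le hx.1
  have h_denom : (ε + x ^ 2) ^ (p - 1) ≤ 2 ^ (p - 1) * x ^ (m + 1) := calc
    (ε + x ^ 2) ^ (p - 1) ≤ (2 * x ^ 2) ^ (p - 1) := by gcongr; linarith
    _ = 2 ^ (p - 1) * x ^ (m + 1) := by
      rw [mul_rpow zero_le_two (by positivity), ← rpow_natCast x 2, ← rpow_mul hx.le,
        ← rpow_natCast x (m + 1)]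
      push_cast
      rw [hp]
  calc 2 ^ (1 - p) * x⁻¹ = x ^ m / (2 ^ (p - 1) * x ^ (m + 1)) := by
        rw [show 1 - p = -(p - 1) by ring, rpow_neg zero_le_two, pow_succ]
        field_simp
    _ ≤ x ^ m / (ε + x ^ 2) ^ (p - 1) := by gcongr

theorem abs_log_le_four_mul_log_div_sqrt (hr : 0 < r) (hε : 0 < ε) (hε1 : ε < 1)
    (hεr : ε ≤ r ^ 4) : |log ε| ≤ 4 * log (r / √ε) := by
  rw [log_div hr.ne' (sqrt_pos.2 hε).ne', log_sqrt hε.le, abs_of_neg (log_neg hε hε1)]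
  have := log_le_log hε hεr
  rw [log_pow] at this
  push_cast at this
  linarith

theorem integral_pow_div_add_sq_rpow_le_of_le (hp : 1 ≤ p) (hr : 0 ≤ r) (hε : 0 < ε)
    (hεδ : ε ≤ δ) :
    ∫ s in (0:ℝ)..r, s ^ m / (δ + s ^ 2) ^ (p - 1) ≤
      ∫ s in (0:ℝ)..r, s ^ m / (ε + s ^ 2) ^ (p - 1) :=
  integral_mono_on hr
    ((continuous_pow_div_add_sq_rpow (hε.trans_le hεδ) m p).intervalIntegrable _ _)
    ((continuous_pow_div_add_sq_rpow hε m p).intervalIntegrable _ _) fun x hx => by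
      have := hx.1
      gcongr

theorem integral_pow_div_add_sq_rpow_pos (hε : 0 < ε) (hr : 0 < r) :
    0 < ∫ s in (0:ℝ)..r, s ^ m / (ε + s ^ 2) ^ (p - 1) :=
  intervalIntegral_pos_of_pos_on ((continuous_pow_div_add_sq_rpow hε m p).intervalIntegrable _ _)
    (fun x hx => by have := hx.1; positivity) hr

end

/-- Three-regime lower bound for `∫_0^r s^{n-2}/(ε+s²)^{p-1} ds`. -/
theorem integral_pow_div_eps_add_sq_lower_bound
    {n : ℕ} (hn : 2 ≤ n) (p r : ℝ) (hp : 1 < p) (hr : 0 < r) :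
    ∃ c > (0:ℝ), ∃ ε0 ∈ Ioo (0:ℝ) 1, ∀ ε ∈ Ioo (0:ℝ) ε0,
      ((((n:ℝ) + 1) / 2 < p →
        c * ε ^ (((n:ℝ) + 1) / 2 - p) ≤
          ∫ s in (0:ℝ)..r, s ^ ((n:ℝ) - 2) / (ε + s ^ 2) ^ (p - 1)) ∧
      (p = ((n:ℝ) + 1) / 2 →
        c * |Real.log ε| ≤
          ∫ s in (0:ℝ)..r, s ^ ((n:ℝ) - 2) / (ε + s ^ 2) ^ (p - 1)) ∧
      (p < ((n:ℝ) + 1) / 2 →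
        c ≤ ∫ s in (0:ℝ)..r, s ^ ((n:ℝ) - 2) / (ε + s ^ 2) ^ (p - 1))) := by
  obtain ⟨m, rfl⟩ : ∃ m, n = m + 2 := ⟨n - 2, by omega⟩
  have hexp : ((m + 2 : ℕ) : ℝ) - 2 = m := by push_cast; ring
  simp only [hexp, rpow_natCast]
  set c₁ : ℝ := 1 / ((m + 1) * 2 ^ (p - 1))
  set c₂ : ℝ := 2 ^ (1 - p) / 4
  set c₃ : ℝ := ∫ s in (0:ℝ)..r, s ^ m / (1 + s ^ 2) ^ (p - 1)
  have hc₃ : 0 < c₃ := integral_pow_div_add_sq_rpow_pos one_pos hr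
  refine ⟨min c₁ (min c₂ c₃), by positivity, min (min (r ^ 2) (r ^ 4)) (1 / 2),
    ⟨by positivity, (min_le_right _ _).trans_lt (by norm_num)⟩, fun ε ⟨hε, hεε0⟩ => ?_⟩
  obtain ⟨⟨hεr2, hεr4⟩, hε_half⟩ := lt_min_iff.1 hεε0 |>.imp_left lt_min_iff.1
  have hsqrt : √ε ≤ r := (sqrt_le_left hr.le).2 hεr2.le
  have hε1 : ε < 1 := by linarith
  refine ⟨fun _ => ?_, fun hcrit => ?_, fun _ => ?_⟩
  · calc min c₁ (min c₂ c₃) * ε ^ (((m + 2 : ℕ) + 1) / 2 - p)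
        ≤ c₁ * ε ^ (((m : ℝ) + 1) / 2 - (p - 1)) := by
          push_cast
          rw [show ((m : ℝ) + 2 + 1) / 2 - p = ((m : ℝ) + 1) / 2 - (p - 1) by ring]
          gcongr
          exact min_le_left _ _
      _ ≤ _ := by
          rw [one_div_mul_eq_div]
          exact rpow_div_le_integral_pow_div_add_sq_rpow hp.le hε hsqrt
  · calc min c₁ (min c₂ c₃) * |log ε| ≤ c₂ * |log ε| := by
          gcongr
          exact (min_le_right _ _).trans (min_le_left _ _)
      _ = 2 ^ (1 - p) * (|log ε| / 4) := by simp only [c₂]; ring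
      _ ≤ 2 ^ (1 - p) * log (r / √ε) := by
          gcongr
          linarith [abs_log_le_four_mul_log_div_sqrt hr hε hε1 hεr4.le]
      _ ≤ _ := rpow_mul_log_le_integral_pow_div_add_sq_rpow
          (by rw [hcrit]; push_cast; ring) hε hsqrt
  · calc min c₁ (min c₂ c₃) ≤ c₃ := (min_le_right _ _).trans (min_le_right _ _)
      _ ≤ _ := integral_pow_div_add_sq_rpow_le_of_le hp.le hr.le hε hε1.le
end

section
/- Let n ≥ 2 be an integer, γ > 0, p > 1, r > 0, ε > 0, and c0 > 1. Let a : ℝ^{n−1} → ℝ be a measurable function with 1/c0 ≤ a(x') ≤ c0 for all |x'| < r, and set ω_{n−2} := 2π^{(n−1)/2}/Γ((n−1)/2) (the surface measure of the unit sphere in ℝ^{n−1}). Then ω_{n−2}·c0^{−(n−1)/(1+γ)}·ε^{(n+γ)/(1+γ)−p}·∫_0^{r(c0^{−1}ε)^{−1/(1+γ)}} s^{n−2}/(1+s^{1+γ})^{p−1} ds ≤ ∫_{{|x'|<r}} (ε + a(x')|x'|^{1+γ})^{1−p} dx' ≤ ω_{n−2}·c0^{(n−1)/(1+γ)}·ε^{(n+γ)/(1+γ)−p}·∫_0^{r(c0·ε)^{−1/(1+γ)}}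 s^{n−2}/(1+s^{1+γ})^{p−1} ds. -/
/-!
Since `c0⁻¹ ≤ a ≤ c0` on the ball and `t ↦ t ^ (1 - p)` is antitone on `(0, ∞)`, the
integrand is squeezed between the radial integrands obtained by freezing `a` to the constants
`c0` and `c0⁻¹`. For a constant `c`, polar coordinates turn the ball integral into
`ω ∫₀^r y^(d-1) (ε + c y^(1+γ))^(1-p) dy`, and the substitution `y = (ε / c)^(1/(1+γ)) s`
pulls out the powers of `c` and `ε`.
-/

open MeasureTheory Set Metric Module Real

theorem setIntegral_ball_fun_norm_addHaar {E F : Type*} [NormedAddCommGroup E]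
    [NormedSpace ℝ E] [Nontrivial E] [FiniteDimensional ℝ E] [MeasurableSpace E] [BorelSpace E]
    [NormedAddCommGroup F] [NormedSpace ℝ F] (μ : Measure E) [μ.IsAddHaarMeasure]
    (f : ℝ → F) {r : ℝ} (hr : 0 ≤ r) :
    ∫ x in ball (0 : E) r, f ‖x‖ ∂μ =
      finrank ℝ E • μ.real (ball 0 1) • ∫ y in 0..r, y ^ (finrank ℝ E - 1) • f y := by
  have h_ind :
      (ball (0 : E) r).indicator (fun x => f ‖x‖) = fun x => (Iio r).indicator f ‖x‖ := by
    ext x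
    simp [indicator]
  have h_radial : ∀ y, y ^ (finrank ℝ E - 1) • (Iio r).indicator f y =
      (Iio r).indicator (fun y => y ^ (finrank ℝ E - 1) • f y) y := by
    intro y
    by_cases hy : y < r <;> simp [indicator, hy]
  rw [← integral_indicator measurableSet_ball, h_ind, integral_fun_norm_addHaar]
  simp_rw [h_radial]
  rw [setIntegral_indicator measurableSet_Iio, Ioi_inter_Iio, ← integral_Ioc_eq_integral_Ioo,
    ← intervalIntegral.integral_of_le hr]

theorem finrank_mul_volume_real_ball_zero_one {E : Type*} [NormedAddCommGroup E]
    [InnerProductSpace ℝ E] [FiniteDimensional ℝ E] [MeasurableSpace E] [BorelSpace E]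
    [Nontrivial E] :
    finrank ℝ E * volume.real (ball (0 : E) 1) =
      2 * π ^ ((finrank ℝ E : ℝ) / 2) / Gamma ((finrank ℝ E : ℝ) / 2) := by
  have hd : (0 : ℝ) < finrank ℝ E := by exact_mod_cast finrank_pos
  rw [measureReal_def, InnerProductSpace.volume_ball, ENNReal.ofReal_one, one_pow, one_mul,
    ENNReal.toReal_ofReal (by positivity), Gamma_add_one (by positivity),
    sqrt_eq_rpow, ← rpow_natCast, ← rpow_mul pi_nonneg]
  have := Gamma_pos_of_pos (by positivity : (0 : ℝ) < finrank ℝ E / 2)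
  field_simp

theorem intervalIntegral_rpow_mul_add_mul_rpow_rpow {m β p ε c R : ℝ} (hβ : 0 < β)
    (hε : 0 < ε) (hc : 0 < c) (hR : 0 ≤ R) :
    ∫ y in 0..R, y ^ m * (ε + c * y ^ β) ^ (1 - p) =
      (c⁻¹ * ε) ^ ((m + 1) / β) * ε ^ (1 - p) *
        ∫ s in 0..R * (c⁻¹ * ε) ^ (-(1 / β)), s ^ m / (1 + s ^ β) ^ (p - 1) := by
  set k := (c⁻¹ * ε) ^ (1 / β) with hk
  have hk_pos : 0 < k := by positivity
  have h_ck : c * k ^ β = ε := by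
    rw [hk, ← rpow_mul (by positivity), one_div_mul_cancel hβ.ne', rpow_one]
    field_simp
  have h_upper : R * (c⁻¹ * ε) ^ (-(1 / β)) = R / k := by
    rw [rpow_neg (by positivity), ← hk, div_eq_mul_inv]
  have h_scale : ∀ s ∈ uIcc 0 (R / k), (k * s) ^ m * (ε + c * (k * s) ^ β) ^ (1 - p) =
      k ^ m * ε ^ (1 - p) * (s ^ m / (1 + s ^ β) ^ (p - 1)) := by
    intro s hs
    have hs : 0 ≤ s := by
      rw [uIcc_of_le (by positivity)] at hs
      exact hs.1
    have h_base : ε + c * (k * s) ^ β = ε * (1 + s ^ β) := by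
      rw [mul_rpow hk_pos.le hs, ← mul_assoc, h_ck]
      ring
    rw [h_base, mul_rpow hk_pos.le hs, mul_rpow hε.le (by positivity), div_eq_mul_inv,
      ← rpow_neg (by positivity), neg_sub]
    ring
  have h_sub := intervalIntegral.integral_comp_mul_left
    (fun y => y ^ m * (ε + c * y ^ β) ^ (1 - p)) (a := 0) (b := R / k) hk_pos.ne'
  rw [mul_zero, mul_div_cancel₀ _ hk_pos.ne', intervalIntegral.integral_congr h_scale,
    intervalIntegral.integral_const_mul, smul_eq_mul] at h_sub
  have h_pow : (c⁻¹ * ε) ^ ((m + 1) / β) = k * k ^ m := by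
    calc (c⁻¹ * ε) ^ ((m + 1) / β) = k ^ (1 + m) := by
          rw [hk, ← rpow_mul (by positivity)]
          ring_nf
      _ = k * k ^ m := by rw [rpow_add hk_pos, rpow_one]
  rw [h_upper, h_pow, mul_assoc k, mul_assoc k, h_sub, mul_inv_cancel_left₀ hk_pos.ne']

theorem setIntegral_ball_rpow_add_mul_norm_rpow {E : Type*} [NormedAddCommGroup E]
    [InnerProductSpace ℝ E] [FiniteDimensional ℝ E] [MeasurableSpace E] [BorelSpace E]
    [Nontrivial E] {β p ε c r : ℝ} (hβ : 0 < β) (hε : 0 < ε) (hc : 0 < c) (hr : 0 ≤ r) :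
    ∫ x in ball (0 : E) r, (ε + c * ‖x‖ ^ β) ^ (1 - p) =
      2 * π ^ ((finrank ℝ E : ℝ) / 2) / Gamma ((finrank ℝ E : ℝ) / 2) *
        c ^ (-((finrank ℝ E : ℝ) / β)) * ε ^ (((finrank ℝ E : ℝ) + β) / β - p) *
        ∫ s in 0..r * (c⁻¹ * ε) ^ (-(1 / β)),
          s ^ ((finrank ℝ E : ℝ) - 1) / (1 + s ^ β) ^ (p - 1) := by
  have h_pow : ∀ y : ℝ, y ^ (finrank ℝ E - 1) = y ^ ((finrank ℝ E : ℝ) - 1) := fun y => by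
    rw [← rpow_natCast, Nat.cast_pred finrank_pos]
  have h_const : (c⁻¹ * ε) ^ (((finrank ℝ E : ℝ) - 1 + 1) / β) * ε ^ (1 - p) =
      c ^ (-((finrank ℝ E : ℝ) / β)) * ε ^ (((finrank ℝ E : ℝ) + β) / β - p) := by
    rw [mul_rpow (by positivity) hε.le, inv_rpow hc.le, ← rpow_neg hc.le, mul_assoc,
      ← rpow_add hε, sub_add_cancel]
    congr 2
    field_simp
    ring
  rw [setIntegral_ball_fun_norm_addHaar volume (fun y => (ε + c * y ^ β) ^ (1 - p)) hr,
    nsmul_eq_mul, smul_eq_mul, ← mul_assoc, finrank_mul_volume_real_ball_zero_one]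
  simp_rw [smul_eq_mul, h_pow]
  rw [intervalIntegral_rpow_mul_add_mul_rpow_rpow hβ hε hc hr, h_const]
  ring

theorem integrableOn_rpow_of_le {X : Type*} [MeasurableSpace X] {μ : Measure X} {s : Set X}
    {f : X → ℝ} {ε q : ℝ} (hs : MeasurableSet s) (hμs : μ s ≠ ⊤) (hf : Measurable f)
    (hε : 0 < ε) (hεf : ∀ x ∈ s, ε ≤ f x) (hq : q ≤ 0) :
    IntegrableOn (fun x => f x ^ q) s μ := by
  refine Measure.integrableOn_of_bounded (M := ε ^ q) hμs
    (hf.pow_const q).aestronglyMeasurable ?_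
  rw [ae_restrict_iff' hs]
  refine Filter.Eventually.of_forall fun x hx => ?_
  rw [norm_of_nonneg (rpow_nonneg (hε.le.trans (hεf x hx)) q)]
  exact rpow_le_rpow_of_nonpos hε (hεf x hx) hq

theorem setIntegral_rpow_le_of_le {X : Type*} [MeasurableSpace X] {μ : Measure X} {s : Set X}
    {f g : X → ℝ} {ε q : ℝ} (hs : MeasurableSet s) (hμs : μ s ≠ ⊤) (hf : Measurable f)
    (hg : Measurable g) (hε : 0 < ε) (hεf : ∀ x ∈ s, ε ≤ f x)
    (hfg : ∀ x ∈ s, f x ≤ g x) (hq : q ≤ 0) :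
    ∫ x in s, g x ^ q ∂μ ≤ ∫ x in s, f x ^ q ∂μ :=
  setIntegral_mono_on
    (integrableOn_rpow_of_le hs hμs hg hε (fun x hx => (hεf x hx).trans (hfg x hx)) hq)
    (integrableOn_rpow_of_le hs hμs hf hε hεf hq) hs
    fun x hx => rpow_le_rpow_of_nonpos (hε.trans_le (hεf x hx)) (hfg x hx) hq

theorem setIntegral_rpow_add_mul_le_of_le {X : Type*} [MeasurableSpace X] {μ : Measure X}
    {s : Set X} {a b w : X → ℝ} {ε q : ℝ} (hs : MeasurableSet s) (hμs : μ s ≠ ⊤)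
    (ha : Measurable a) (hb : Measurable b) (hw : Measurable w) (hε : 0 < ε)
    (ha₀ : ∀ x ∈ s, 0 ≤ a x) (hab : ∀ x ∈ s, a x ≤ b x)
    (hw₀ : ∀ x ∈ s, 0 ≤ w x) (hq : q ≤ 0) :
    ∫ x in s, (ε + b x * w x) ^ q ∂μ ≤ ∫ x in s, (ε + a x * w x) ^ q ∂μ :=
  setIntegral_rpow_le_of_le hs hμs (by fun_prop) (by fun_prop) hε
    (fun x hx => le_add_of_nonneg_right (mul_nonneg (ha₀ x hx) (hw₀ x hx)))
    (fun x hx => by gcongr; exacts [hw₀ x hx, hab x hx])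
    hq

/-- The key sandwich (equations (4.2)-(4.3)) in the proof of Lemma 4.1. -/
theorem polar_sandwich_C1gamma
    {n : ℕ} (hn : 2 ≤ n) (γ p r ε c0 : ℝ) (hγ : 0 < γ) (hp : 1 < p)
    (hr : 0 < r) (hε : 0 < ε) (hc0 : 1 < c0)
    (a : EuclideanSpace ℝ (Fin (n-1)) → ℝ) (ha_meas : Measurable a)
    (ha : ∀ x' : EuclideanSpace ℝ (Fin (n-1)), ‖x'‖ < r → a x' ∈ Icc (c0⁻¹) c0) :
    let ω : ℝ := 2 * Real.pi ^ (((n:ℝ) - 1) / 2) / Real.Gamma (((n:ℝ) - 1) / 2)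
    ω * c0 ^ (-(((n:ℝ) - 1) / (1 + γ))) * ε ^ (((n:ℝ) + γ) / (1 + γ) - p) *
        (∫ s in (0:ℝ)..(r * (c0⁻¹ * ε) ^ (-(1 / (1 + γ)))),
          s ^ ((n:ℝ) - 2) / (1 + s ^ (1 + γ)) ^ (p - 1)) ≤
      (∫ x' in {x' : EuclideanSpace ℝ (Fin (n-1)) | ‖x'‖ < r},
        (ε + a x' * ‖x'‖ ^ (1 + γ)) ^ (1 - p)) ∧
    (∫ x' in {x' : EuclideanSpace ℝ (Fin (n-1)) | ‖x'‖ < r},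
        (ε + a x' * ‖x'‖ ^ (1 + γ)) ^ (1 - p)) ≤
      ω * c0 ^ (((n:ℝ) - 1) / (1 + γ)) * ε ^ (((n:ℝ) + γ) / (1 + γ) - p) *
        ∫ s in (0:ℝ)..(r * (c0 * ε) ^ (-(1 / (1 + γ)))),
          s ^ ((n:ℝ) - 2) / (1 + s ^ (1 + γ)) ^ (p - 1) := by
  intro ω
  have : Nontrivial (EuclideanSpace ℝ (Fin (n - 1))) :=
    Module.nontrivial_of_finrank_pos (by rw [finrank_euclideanSpace_fin]; omega)
  have h_dim : (finrank ℝ (EuclideanSpace ℝ (Fin (n - 1))) : ℝ) = n - 1 := by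
    rw [finrank_euclideanSpace_fin, Nat.cast_pred (by omega)]
  have h_exp : ((n : ℝ) - 1 + (1 + γ)) / (1 + γ) - p = ((n : ℝ) + γ) / (1 + γ) - p := by
    ring
  have h_lower := setIntegral_ball_rpow_add_mul_norm_rpow (E := EuclideanSpace ℝ (Fin (n - 1)))
    (by linarith : 0 < 1 + γ) (p := p) hε (by linarith : 0 < c0) hr.le
  have h_upper := setIntegral_ball_rpow_add_mul_norm_rpow (E := EuclideanSpace ℝ (Fin (n - 1)))
    (by linarith : 0 < 1 + γ) (p := p) hε (by positivity : 0 < c0⁻¹) hr.le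
  rw [h_dim, h_exp, sub_sub, one_add_one_eq_two] at h_lower h_upper
  rw [inv_inv, inv_rpow (by linarith), ← rpow_neg (by linarith), neg_neg] at h_upper
  have h_ball : {x' : EuclideanSpace ℝ (Fin (n - 1)) | ‖x'‖ < r} = ball 0 r := by ext; simp
  have h_a : ∀ x ∈ ball (0 : EuclideanSpace ℝ (Fin (n - 1))) r, a x ∈ Icc c0⁻¹ c0 :=
    fun x hx => ha x (mem_ball_zero_iff.1 hx)
  have h_inv_c0 : 0 < c0⁻¹ := by positivity
  rw [h_ball]
  constructor
  · exact h_lower.symm.trans_le <| setIntegral_rpow_add_mul_le_of_le measurableSet_ball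
      measure_ball_lt_top.ne ha_meas measurable_const (by fun_prop) hε
      (fun x hx => h_inv_c0.le.trans (h_a x hx).1) (fun x hx => (h_a x hx).2)
      (fun x _ => by positivity) (by linarith)
  · exact (setIntegral_rpow_add_mul_le_of_le measurableSet_ball measure_ball_lt_top.ne
      measurable_const ha_meas (by fun_prop) hε (fun _ _ => h_inv_c0.le)
      (fun x hx => (h_a x hx).1) (fun x _ => by positivity) (by linarith)).trans_eq h_upper
end

section
/- Let n ≥ 2 be an integer, γ ∈ (0,1), p > (n+γ)/(1+γ), r > 0, and a0 > 0. Define K := ((1+γ)/(2π^{(n−1)/2})) · Γ((n−1)/2)·Γ(p−1) / (Γ((n−1)/(1+γ))·Γ(p−(n+γ)/(1+γ))). Then lim_{ε→0⁺} ε^{(p−1)−(n−1)/(1+γ)} · ∫_{{|x'|<r}} (ε + a0·|x'|^{1+γ})^{1−p} dx' = a0^{(1−n)/(1+γ)}/K. -/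
/-!
In polar coordinates the integral becomes `d |B₁| ∫₀^r y^(d-1) (ε + a y^q)^(1-p) dy`, where `d` is
the dimension. The substitution `y = (ε/a)^(1/q) t` pulls out exactly the factor
`ε^(d/q - (p-1)) a^(-d/q)` and leaves `∫₀^R t^(d-1) (1 + t^q)^(1-p) dt`
with `R = r (a/ε)^(1/q) → ∞`.
For `d/q < p - 1` the limit is a Beta integral, and `d |B₁| = 2 π^(d/2) / Γ(d/2)` turns the constant
into `1/K`.
-/

open MeasureTheory Filter Set

/-- The constant `K` from the paper (supercritical case `p > (n+γ)/(1+γ)`). -/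
noncomputable def Kconst (n : ℕ) (γ p : ℝ) : ℝ :=
  ((1 + γ) / (2 * Real.pi ^ (((n:ℝ) - 1) / 2))) *
    (Real.Gamma (((n:ℝ) - 1) / 2) * Real.Gamma (p - 1)) /
    (Real.Gamma (((n:ℝ) - 1) / (1 + γ)) * Real.Gamma (p - ((n:ℝ) + γ) / (1 + γ)))

open Real Module Metric Topology

theorem integral_Ioo_rpow_mul_one_sub_rpow {a b : ℝ} (ha : 0 < a) (hb : 0 < b) :
    ∫ x in Ioo (0 : ℝ) 1, x ^ (a - 1) * (1 - x) ^ (b - 1) = Gamma a * Gamma b / Gamma (a + b) := by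
  have hcast : Complex.betaIntegral a b
      = ↑(∫ x in Ioo (0 : ℝ) 1, x ^ (a - 1) * (1 - x) ^ (b - 1)) := by
    rw [Complex.betaIntegral, intervalIntegral.integral_of_le zero_le_one,
      integral_Ioc_eq_integral_Ioo, ← integral_complex_ofReal]
    refine setIntegral_congr_fun measurableSet_Ioo fun x hx => ?_
    simp only [Complex.ofReal_mul]
    rw [Complex.ofReal_cpow hx.1.le, Complex.ofReal_cpow (sub_nonneg.2 hx.2.le)]
    push_cast; rfl
  have h := Complex.betaIntegral_eq_Gamma_mul_div a b (by simpa using ha) (by simpa using hb)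
  rw [hcast, ← Complex.ofReal_add, Complex.Gamma_ofReal, Complex.Gamma_ofReal,
    Complex.Gamma_ofReal] at h
  exact_mod_cast h

theorem integral_Ioi_rpow_mul_one_add_rpow {a b : ℝ} (ha : 0 < a) (hb : 0 < b) :
    ∫ u in Ioi (0 : ℝ), u ^ (a - 1) * (1 + u) ^ (-(a + b)) = Gamma a * Gamma b / Gamma (a + b) := by
  have hdiv : ∀ x ∈ Ioo (0 : ℝ) 1, 0 < 1 - x := fun x hx => sub_pos.2 hx.2
  have himage : (fun x : ℝ => x / (1 - x)) '' Ioo 0 1 = Ioi 0 := by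
    refine Subset.antisymm (image_subset_iff.2 fun x hx => div_pos hx.1 (hdiv x hx)) fun u hu => ?_
    have hu : (0 : ℝ) < u := hu
    refine ⟨u / (1 + u), ⟨by positivity, (div_lt_one (by positivity)).2 (by linarith)⟩, ?_⟩
    field_simp
    ring
  have hderiv : ∀ x ∈ Ioo (0 : ℝ) 1,
      HasDerivWithinAt (fun x : ℝ => x / (1 - x)) (((1 - x) ^ 2)⁻¹) (Ioo 0 1) x := by
    intro x hx
    have h := (hasDerivAt_id x).div ((hasDerivAt_const x (1 : ℝ)).sub (hasDerivAt_id x))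
      (hdiv x hx).ne'
    refine (h.congr_deriv ?_).hasDerivWithinAt
    simp only [Pi.sub_apply, id]
    field_simp
    ring
  have hinj : InjOn (fun x : ℝ => x / (1 - x)) (Ioo 0 1) := by
    intro x hx y hy hxy
    have := (hdiv x hx).ne'
    have := (hdiv y hy).ne'
    field_simp at hxy
    linarith
  rw [← himage, integral_image_eq_integral_abs_deriv_smul measurableSet_Ioo hderiv hinj,
    ← integral_Ioo_rpow_mul_one_sub_rpow ha hb]
  refine setIntegral_congr_fun measurableSet_Ioo fun x hx => ?_
  have hx0 := hx.1
  have hy := hdiv x hx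
  have hsum : 1 + x / (1 - x) = (1 - x)⁻¹ := by field_simp; ring
  rw [smul_eq_mul, hsum, abs_of_pos (by positivity), div_rpow hx0.le hy.le, inv_rpow hy.le,
    ← rpow_neg hy.le, neg_neg, ← rpow_two, ← rpow_neg hy.le, div_eq_mul_inv, ← rpow_neg hy.le]
  calc (1 - x) ^ (-2 : ℝ) * (x ^ (a - 1) * (1 - x) ^ (-(a - 1)) * (1 - x) ^ (a + b))
      = x ^ (a - 1) * ((1 - x) ^ (-2 : ℝ) * (1 - x) ^ (-(a - 1)) * (1 - x) ^ (a + b)) := by ring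
    _ = x ^ (a - 1) * (1 - x) ^ (b - 1) := by
      rw [← rpow_add hy, ← rpow_add hy]; ring_nf

theorem integral_Ioi_rpow_mul_one_add_rpow_rpow {s q p : ℝ} (hs : 0 < s) (hq : 0 < q)
    (hsp : s / q < p - 1) :
    ∫ t in Ioi (0 : ℝ), t ^ (s - 1) * (1 + t ^ q) ^ (1 - p)
      = Gamma (s / q) * Gamma (p - 1 - s / q) / (q * Gamma (p - 1)) := by
  have hsub := integral_comp_rpow_Ioi
    (fun u => u ^ (s / q - 1) * (1 + u) ^ (-(s / q + (p - 1 - s / q)))) hq.ne'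
  rw [integral_Ioi_rpow_mul_one_add_rpow (by positivity) (by linarith),
    add_sub_cancel] at hsub
  have hscaled : q * ∫ t in Ioi (0 : ℝ), t ^ (s - 1) * (1 + t ^ q) ^ (1 - p)
      = Gamma (s / q) * Gamma (p - 1 - s / q) / Gamma (p - 1) := by
    rw [← hsub, ← integral_const_mul]
    refine setIntegral_congr_fun measurableSet_Ioi fun t ht => ?_
    have ht : (0 : ℝ) < t := ht
    have hpow : t ^ (q - 1) * (t ^ q) ^ (s / q - 1) = t ^ (s - 1) := by
      rw [← rpow_mul ht.le, ← rpow_add ht]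
      congr 1
      field_simp
      ring
    rw [smul_eq_mul, abs_of_pos hq, ← hpow]
    ring_nf
  rw [mul_comm q, ← div_div, ← hscaled]
  field_simp

theorem integrableOn_Ioi_rpow_mul_one_add_rpow_rpow {s q p : ℝ} (hs : 0 < s) (hq : 0 < q)
    (hsp : s / q < p - 1) :
    IntegrableOn (fun t : ℝ => t ^ (s - 1) * (1 + t ^ q) ^ (1 - p)) (Ioi 0) := by
  -- a non-integrable function has integral `0`
  refine .of_integral_ne_zero ?_
  rw [integral_Ioi_rpow_mul_one_add_rpow_rpow hs hq hsp]
  have := Gamma_pos_of_pos (div_pos hs hq)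
  have := Gamma_pos_of_pos (sub_pos.2 hsp)
  have := Gamma_pos_of_pos (by linarith [div_pos hs hq] : 0 < p - 1)
  positivity

section AddHaar

variable {E : Type*} [NormedAddCommGroup E] [NormedSpace ℝ E] [FiniteDimensional ℝ E]
  [MeasurableSpace E] [BorelSpace E] [Nontrivial E] (μ : Measure E) [μ.IsAddHaarMeasure]

theorem setIntegral_fun_norm_lt_addHaar (f : ℝ → ℝ) {r : ℝ} (hr : 0 ≤ r) :
    ∫ x in {x : E | ‖x‖ < r}, f ‖x‖ ∂μ
      = finrank ℝ E * μ.real (ball 0 1) * ∫ y in 0..r, y ^ ((finrank ℝ E : ℝ) - 1) * f y := by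
  have hS : {x : E | ‖x‖ < r} = (‖·‖) ⁻¹' Iio r := rfl
  rw [← integral_indicator (measurableSet_lt measurable_norm measurable_const), hS]
  have hind : ((‖·‖) ⁻¹' Iio r).indicator (fun x : E => f ‖x‖) = fun x => (Iio r).indicator f ‖x‖ :=
    funext fun x => indicator_comp_right (‖·‖)
  rw [hind, integral_fun_norm_addHaar μ, nsmul_eq_mul, smul_eq_mul, mul_assoc,
    intervalIntegral.integral_of_le hr, integral_Ioc_eq_integral_Ioo, ← Ioi_inter_Iio,
    ← setIntegral_indicator measurableSet_Iio]
  congr 2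
  refine setIntegral_congr_fun measurableSet_Ioi fun y (hy : 0 < y) => ?_
  have hdim : 1 ≤ finrank ℝ E := finrank_pos
  rw [smul_eq_mul, indicator_mul_right, ← rpow_natCast, Nat.cast_sub hdim, Nat.cast_one]

theorem intervalIntegral_rpow_mul_add_mul_rpow_rpow_s10 {s q p ε a r : ℝ} (hq : 0 < q)
    (hε : 0 < ε) (ha : 0 < a) (hr : 0 ≤ r) :
    ∫ y in 0..r, y ^ (s - 1) * (ε + a * y ^ q) ^ (1 - p)
      = (ε / a) ^ (s / q) * ε ^ (1 - p) *
          ∫ t in 0..r * (a / ε) ^ (1 / q), t ^ (s - 1) * (1 + t ^ q) ^ (1 - p) := by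
  set c := (ε / a) ^ (1 / q) with hc
  have hc0 : 0 < c := by positivity
  have hcq : c ^ q = ε / a := by
    rw [hc, ← rpow_mul (by positivity), one_div_mul_cancel hq.ne', rpow_one]
  have hcR : c * (r * (a / ε) ^ (1 / q)) = r := by
    rw [hc, mul_left_comm, ← mul_rpow (by positivity) (by positivity),
      show ε / a * (a / ε) = 1 by field_simp, one_rpow, mul_one]
  have hsub := intervalIntegral.integral_comp_mul_left
    (fun y => y ^ (s - 1) * (ε + a * y ^ q) ^ (1 - p)) hc0.ne' (a := 0) (b := r * (a / ε) ^ (1 / q))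
  rw [mul_zero, hcR, smul_eq_mul] at hsub
  have hpointwise : ∀ t ∈ uIcc 0 (r * (a / ε) ^ (1 / q)),
      (c * t) ^ (s - 1) * (ε + a * (c * t) ^ q) ^ (1 - p)
        = c ^ (s - 1) * ε ^ (1 - p) * (t ^ (s - 1) * (1 + t ^ q) ^ (1 - p)) := by
    intro t ht
    have ht : 0 ≤ t := by rw [uIcc_of_le (by positivity)] at ht; exact ht.1
    have hsum : ε + a * (c * t) ^ q = ε * (1 + t ^ q) := by
      rw [mul_rpow hc0.le ht, hcq]
      field_simp
    rw [hsum, mul_rpow hc0.le ht, mul_rpow hε.le (by positivity)]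
    ring
  have hcs : c * c ^ (s - 1) = (ε / a) ^ (s / q) := by
    calc c * c ^ (s - 1) = c ^ (1 + (s - 1)) := by rw [rpow_add hc0, rpow_one]
      _ = (ε / a) ^ (s / q) := by rw [hc, ← rpow_mul (by positivity)]; ring_nf
  rw [intervalIntegral.integral_congr hpointwise, intervalIntegral.integral_const_mul] at hsub
  rw [← hcs, mul_assoc, mul_assoc, ← mul_assoc (c ^ (s - 1)), hsub, mul_inv_cancel_left₀ hc0.ne']

theorem tendsto_rpow_mul_setIntegral_norm_lt {q p a r : ℝ} (hq : 0 < q)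
    (hp : finrank ℝ E / q < p - 1) (ha : 0 < a) (hr : 0 < r) :
    Tendsto (fun ε : ℝ => ε ^ (p - 1 - finrank ℝ E / q) *
        ∫ x in {x : E | ‖x‖ < r}, (ε + a * ‖x‖ ^ q) ^ (1 - p) ∂μ) (𝓝[>] 0)
      (𝓝 (a ^ (-(finrank ℝ E / q)) * (finrank ℝ E * μ.real (ball 0 1)) *
        (Gamma (finrank ℝ E / q) * Gamma (p - 1 - finrank ℝ E / q) / (q * Gamma (p - 1))))) := by
  set d : ℝ := (finrank ℝ E : ℝ)
  have hd : 0 < d := by simpa [d] using finrank_pos (R := ℝ) (M := E)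
  have hR : Tendsto (fun ε : ℝ => r * (a / ε) ^ (1 / q)) (𝓝[>] 0) atTop := by
    have hinv : Tendsto (fun ε : ℝ => a / ε) (𝓝[>] 0) atTop := by
      simpa only [div_eq_mul_inv] using tendsto_inv_nhdsGT_zero.const_mul_atTop ha
    exact ((tendsto_rpow_atTop (by positivity)).comp hinv).const_mul_atTop hr
  rw [← integral_Ioi_rpow_mul_one_add_rpow_rpow hd hq hp]
  refine ((intervalIntegral_tendsto_integral_Ioi 0
    (integrableOn_Ioi_rpow_mul_one_add_rpow_rpow hd hq hp) hR).const_mul _).congr'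
    (eventually_mem_nhdsWithin.mono fun ε (hε : 0 < ε) => ?_)
  have hε_pow : ε ^ (p - 1 - d / q) * ε ^ (d / q) * ε ^ (1 - p) = 1 := by
    rw [← rpow_add hε, ← rpow_add hε]; ring_nf; exact rpow_zero ε
  dsimp only
  rw [setIntegral_fun_norm_lt_addHaar μ (fun s => (ε + a * s ^ q) ^ (1 - p)) hr.le,
    intervalIntegral_rpow_mul_add_mul_rpow_rpow_s10 hq hε ha hr.le, div_rpow hε.le ha.le,
    rpow_neg ha.le]
  linear_combination -(a ^ (d / q))⁻¹ * (d * μ.real (ball 0 1)) *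
    (∫ t in 0..r * (a / ε) ^ (1 / q), t ^ (d - 1) * (1 + t ^ q) ^ (1 - p)) * hε_pow

end AddHaar

theorem inv_Kconst_eq {n : ℕ} (hn : 2 ≤ n) {γ : ℝ} (hγ : 1 + γ ≠ 0) (p : ℝ) :
    (Kconst n γ p)⁻¹ = ((n : ℝ) - 1) * volume.real (ball (0 : EuclideanSpace ℝ (Fin (n - 1))) 1) *
      (Gamma (((n : ℝ) - 1) / (1 + γ)) * Gamma (p - 1 - ((n : ℝ) - 1) / (1 + γ)) /
        ((1 + γ) * Gamma (p - 1))) := by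
  have hm : ((n - 1 : ℕ) : ℝ) = n - 1 := by rw [Nat.cast_sub (by omega), Nat.cast_one]
  have hm0 : (0 : ℝ) < (n - 1) / 2 := by
    have : (2 : ℝ) ≤ n := by exact_mod_cast hn
    linarith
  have hexp : p - ((n : ℝ) + γ) / (1 + γ) = p - 1 - ((n : ℝ) - 1) / (1 + γ) := by
    field_simp; ring
  have hsqrt : √π ^ (n - 1) = π ^ (((n : ℝ) - 1) / 2) := by
    rw [sqrt_eq_rpow, ← rpow_natCast, ← rpow_mul pi_pos.le, hm]; ring_nf
  have : Nonempty (Fin (n - 1)) := ⟨⟨0, by omega⟩⟩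
  have hvol : volume.real (ball (0 : EuclideanSpace ℝ (Fin (n - 1))) 1)
      = π ^ (((n : ℝ) - 1) / 2) / Gamma (((n : ℝ) - 1) / 2 + 1) := by
    rw [measureReal_def, EuclideanSpace.volume_ball, Fintype.card_fin, ENNReal.ofReal_one, one_pow,
      one_mul, hsqrt, hm, ENNReal.toReal_ofReal (by positivity)]
  have := Gamma_pos_of_pos hm0
  have : (n : ℝ) - 1 ≠ 0 := by linarith
  rw [hvol, Gamma_add_one hm0.ne', Kconst, hexp]
  field_simp

/-- Remark 4.5, supercritical case with constant coefficient `a₀`. -/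
theorem tendsto_scaled_integral_constant_coeff
    {n : ℕ} (hn : 2 ≤ n) (γ p r a0 : ℝ) (hγ : γ ∈ Ioo (0:ℝ) 1)
    (hp : ((n:ℝ) + γ) / (1 + γ) < p) (hr : 0 < r) (ha0 : 0 < a0) :
    Tendsto (fun ε : ℝ =>
      ε ^ ((p - 1) - ((n:ℝ) - 1) / (1 + γ)) *
        ∫ x' in {x' : EuclideanSpace ℝ (Fin (n-1)) | ‖x'‖ < r},
          (ε + a0 * ‖x'‖ ^ (1 + γ)) ^ (1 - p))
      (nhdsWithin 0 (Ioi 0))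
      (nhds (a0 ^ ((1 - (n:ℝ)) / (1 + γ)) / Kconst n γ p)) := by
  have hq : 0 < 1 + γ := by linarith [hγ.1]
  have hdim : (finrank ℝ (EuclideanSpace ℝ (Fin (n - 1))) : ℝ) = n - 1 := by
    rw [finrank_euclideanSpace_fin, Nat.cast_sub (by omega), Nat.cast_one]
  have : Nontrivial (EuclideanSpace ℝ (Fin (n - 1))) :=
    nontrivial_of_finrank_pos (R := ℝ) (by rw [finrank_euclideanSpace_fin]; omega)
  have hp' : ((n : ℝ) - 1) / (1 + γ) < p - 1 := by
    rwa [show ((n : ℝ) + γ) / (1 + γ) = 1 + ((n : ℝ) - 1) / (1 + γ) by field_simp; ring,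
      ← lt_sub_iff_add_lt'] at hp
  have hlim := tendsto_rpow_mul_setIntegral_norm_lt volume hq (hdim ▸ hp') ha0 hr
  rw [hdim] at hlim
  convert hlim using 2
  rw [div_eq_mul_inv, inv_Kconst_eq hn hq.ne',
    show (1 - (n : ℝ)) / (1 + γ) = -(((n : ℝ) - 1) / (1 + γ)) by ring]
  ring
end

section
/- Let n ≥ 2 be an integer, γ ∈ (0,1), r > 0, and a0 > 0. Then lim_{ε→0⁺} |ln ε|^{−1} · ∫_{{|x'|<r}} (ε + a0·|x'|^{1+γ})^{−(n−1)/(1+γ)} dx' = a0^{(1−n)/(1+γ)} · 2π^{(n−1)/2} / ((1+γ)·Γ((n−1)/2)). -/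
/-!
In polar coordinates the integral is `|S^{d-1}| ∫₀^r y^(d-1) (ε + a y^s)^(-d/s) dy` with
`d = n - 1`, `s = 1 + γ`. Let `A = (ε/a)^(1/s)` be the radius at which `ε = a A^s`. On `[0, A]`
the integrand is at most `ε^(-d/s) y^(d-1)`, contributing `O(1)`; on `[A, r]` it equals
`a^(-d/s) y⁻¹ (1 + (A/y)^s)^(-d/s)`, which lies between `a^(-d/s) y⁻¹ (1 - (d/s)(A/y)^s)` and
`a^(-d/s) y⁻¹`, so it contributes `a^(-d/s) log (r/A) + O(1) = a^(-d/s) |log ε| / s + O(1)`.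
-/

open MeasureTheory Filter Set Asymptotics Topology

theorem setIntegral_ball_fun_norm_s11 {E F : Type*} [NormedAddCommGroup E]
    [InnerProductSpace ℝ E] [FiniteDimensional ℝ E] [Nontrivial E] [MeasurableSpace E]
    [BorelSpace E] [NormedAddCommGroup F] [NormedSpace ℝ F]
    (μ : Measure E) [μ.IsAddHaarMeasure] (f : ℝ → F) (r : ℝ) :
    ∫ x in Metric.ball 0 r, f ‖x‖ ∂μ =
      Module.finrank ℝ E • μ.real (Metric.ball 0 1) •
        ∫ y in Ioo 0 r, y ^ (Module.finrank ℝ E - 1) • f y := by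
  have hball : ∀ x : E,
      (Metric.ball 0 r).indicator (fun x => f ‖x‖) x = (Iio r).indicator f ‖x‖ :=
    fun x => by by_cases h : ‖x‖ < r <;> simp [h, indicator]
  have hsmul : ∀ y : ℝ, y ^ (Module.finrank ℝ E - 1) • (Iio r).indicator f y =
      (Iio r).indicator (fun y => y ^ (Module.finrank ℝ E - 1) • f y) y :=
    fun y => by by_cases h : y < r <;> simp [h]
  rw [← integral_indicator measurableSet_ball, funext hball, integral_fun_norm_addHaar,
    funext hsmul, setIntegral_indicator measurableSet_Iio, Ioi_inter_Iio]

theorem EuclideanSpace.natCast_mul_volumeReal_ball_zero_one {d : ℕ} (hd : d ≠ 0) :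
    d * volume.real (Metric.ball (0 : EuclideanSpace ℝ (Fin d)) 1) =
      2 * Real.pi ^ ((d : ℝ) / 2) / Real.Gamma ((d : ℝ) / 2) := by
  have : Nonempty (Fin d) := ⟨⟨0, Nat.pos_of_ne_zero hd⟩⟩
  have hd2 : (d : ℝ) / 2 ≠ 0 := by positivity
  have hΓ : 0 < Real.Gamma ((d : ℝ) / 2) := Real.Gamma_pos_of_pos (by positivity)
  rw [measureReal_def, EuclideanSpace.volume_ball, Fintype.card_fin, ENNReal.ofReal_one, one_pow,
    one_mul, ENNReal.toReal_ofReal (by positivity), Real.Gamma_add_one hd2,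
    Real.sqrt_eq_rpow, ← Real.rpow_natCast, ← Real.rpow_mul Real.pi_nonneg]
  field_simp

theorem Real.one_sub_mul_le_one_add_rpow_neg {β t : ℝ} (hβ : 0 ≤ β) (ht : -1 < t) :
    1 - β * t ≤ (1 + t) ^ (-β) := by
  have ht' : 0 < 1 + t := by linarith
  have hlog : Real.log (1 + t) ≤ t := by linarith [Real.log_le_sub_one_of_pos ht']
  calc 1 - β * t = -β * t + 1 := by ring
    _ ≤ Real.exp (-β * t) := Real.add_one_le_exp _
    _ ≤ Real.exp (Real.log (1 + t) * (-β)) := Real.exp_le_exp.2 (by nlinarith)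
    _ = (1 + t) ^ (-β) := (Real.rpow_def_of_pos ht' _).symm

theorem tendsto_abs_log_inv_mul_of_isBigO {f : ℝ → ℝ} {c : ℝ}
    (hf : (fun ε => f ε - c * |Real.log ε|) =O[𝓝[>] 0] fun _ => (1 : ℝ)) :
    Tendsto (fun ε => |Real.log ε|⁻¹ * f ε) (𝓝[>] 0) (𝓝 c) := by
  have hinv : Tendsto (fun ε : ℝ => |Real.log ε|⁻¹) (𝓝[>] 0) (𝓝 0) :=
    tendsto_inv_atTop_zero.comp (tendsto_abs_atBot_atTop.comp Real.tendsto_log_nhdsGT_zero)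
  have herr : Tendsto (fun ε => |Real.log ε|⁻¹ * (f ε - c * |Real.log ε|)) (𝓝[>] 0) (𝓝 0) :=
    ((isBigO_refl _ _).mul hf).trans_tendsto (by simpa using hinv)
  have hlog : ∀ᶠ ε in 𝓝[>] (0 : ℝ), Real.log ε ≠ 0 :=
    Real.tendsto_log_nhdsGT_zero.eventually_ne_atBot 0
  refine (herr.const_add c).congr' ?_ |>.trans (by simp)
  filter_upwards [hlog] with ε hε
  field_simp
  ring

noncomputable def radialProfile (d : ℕ) (s a ε y : ℝ) : ℝ :=
  y ^ (d - 1) * (ε + a * y ^ s) ^ (-((d : ℝ) / s))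

section RadialProfile

variable {d : ℕ} {s a ε r A y : ℝ}

theorem pow_mul_rpow_neg_div_eq (hd : d ≠ 0) (hs : s ≠ 0) (ha : 0 ≤ a) (hy : 0 < y) :
    y ^ (d - 1) * (a * y ^ s) ^ (-((d : ℝ) / s)) = a ^ (-((d : ℝ) / s)) * y⁻¹ := by
  rw [Real.mul_rpow ha (Real.rpow_nonneg hy.le _), ← Real.rpow_mul hy.le,
    mul_neg, mul_div_cancel₀ _ hs, ← Real.rpow_natCast,
    Nat.cast_sub (Nat.one_le_iff_ne_zero.2 hd), mul_left_comm, ← Real.rpow_add hy, Nat.cast_one,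
    show (d : ℝ) - 1 + -d = -1 by ring, Real.rpow_neg_one]

theorem continuousOn_radialProfile (hs : 0 < s) (ha : 0 ≤ a) (hε : 0 < ε) :
    ContinuousOn (radialProfile d s a ε) (Ici 0) := by
  refine (continuous_pow _).continuousOn.mul (ContinuousOn.rpow_const ?_ ?_)
  · exact (continuous_const.add (continuous_const.mul
      (Real.continuous_rpow_const hs.le))).continuousOn
  · exact fun y hy => Or.inl (by positivity [mem_Ici.1 hy])

theorem intervalIntegrable_radialProfile (hs : 0 < s) (ha : 0 ≤ a) (hε : 0 < ε) {b c : ℝ}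
    (hb : 0 ≤ b) (hbc : b ≤ c) : IntervalIntegrable (radialProfile d s a ε) volume b c :=
  ((continuousOn_radialProfile hs ha hε).mono fun _ hy => hb.trans hy.1
    ).intervalIntegrable_of_Icc hbc

theorem radialProfile_nonneg (ha : 0 ≤ a) (hε : 0 ≤ ε) (hy : 0 ≤ y) :
    0 ≤ radialProfile d s a ε y := by
  unfold radialProfile; positivity

theorem radialProfile_le_rpow_mul_pow (hs : 0 < s) (ha : 0 ≤ a) (hε : 0 < ε) (hy : 0 ≤ y) :
    radialProfile d s a ε y ≤ ε ^ (-((d : ℝ) / s)) * y ^ (d - 1) := by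
  rw [radialProfile, mul_comm]
  exact mul_le_mul_of_nonneg_right (Real.rpow_le_rpow_of_nonpos hε
    (le_add_of_nonneg_right (by positivity)) (neg_nonpos.2 (by positivity))) (by positivity)

theorem radialProfile_le_rpow_mul_inv (hd : d ≠ 0) (hs : 0 < s) (ha : 0 < a) (hε : 0 ≤ ε)
    (hy : 0 < y) : radialProfile d s a ε y ≤ a ^ (-((d : ℝ) / s)) * y⁻¹ := by
  rw [radialProfile, ← pow_mul_rpow_neg_div_eq hd hs.ne' ha.le hy]
  exact mul_le_mul_of_nonneg_left (Real.rpow_le_rpow_of_nonpos (by positivity)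
    (le_add_of_nonneg_left hε) (neg_nonpos.2 (by positivity))) (by positivity)

theorem rpow_mul_sub_le_radialProfile (hd : d ≠ 0) (hs : 0 < s) (ha : 0 < a) (hε : 0 ≤ ε)
    (hy : 0 < y) :
    a ^ (-((d : ℝ) / s)) * (y⁻¹ - d / s * (ε / a) * y ^ (-(s + 1))) ≤
      radialProfile d s a ε y := by
  have hays : 0 < a * y ^ s := by positivity
  set t := ε / (a * y ^ s)
  have hsplit : ε + a * y ^ s = a * y ^ s * (1 + t) := by
    rw [mul_one_add, mul_div_cancel₀ _ hays.ne', add_comm]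
  have hyt : y⁻¹ * t = ε / a * y ^ (-(s + 1)) := by
    rw [Real.rpow_neg hy.le, Real.rpow_add hy, Real.rpow_one]
    simp only [t]
    field_simp
  calc a ^ (-((d : ℝ) / s)) * (y⁻¹ - d / s * (ε / a) * y ^ (-(s + 1)))
      = a ^ (-((d : ℝ) / s)) * y⁻¹ * (1 - d / s * t) := by
        linear_combination (a ^ (-((d : ℝ) / s)) * (d / s)) * hyt
    _ ≤ a ^ (-((d : ℝ) / s)) * y⁻¹ * (1 + t) ^ (-((d : ℝ) / s)) := by
      gcongr
      exact Real.one_sub_mul_le_one_add_rpow_neg (by positivity)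
        (neg_one_lt_zero.trans_le (by positivity))
    _ = radialProfile d s a ε y := by
      rw [radialProfile, hsplit, Real.mul_rpow hays.le (by positivity), ← mul_assoc,
        pow_mul_rpow_neg_div_eq hd hs.ne' ha.le hy]

theorem integral_radialProfile_le (hd : d ≠ 0) (hs : 0 < s) (ha : 0 < a) (hA : 0 < A)
    (hAr : A ≤ r) :
    ∫ y in 0..r, radialProfile d s a (a * A ^ s) y ≤
      a ^ (-((d : ℝ) / s)) * ((d : ℝ)⁻¹ + Real.log (r / A)) := by
  have hε : 0 < a * A ^ s := by positivity
  have hd1 : 1 ≤ d := Nat.one_le_iff_ne_zero.2 hd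
  have hint : ∀ {b c}, 0 ≤ b → b ≤ c →
      IntervalIntegrable (radialProfile d s a (a * A ^ s)) volume b c :=
    intervalIntegrable_radialProfile hs ha.le hε
  have hinner : ∫ y in 0..A, radialProfile d s a (a * A ^ s) y ≤
      a ^ (-((d : ℝ) / s)) * (d : ℝ)⁻¹ :=
    calc ∫ y in 0..A, radialProfile d s a (a * A ^ s) y
        ≤ ∫ y in 0..A, (a * A ^ s) ^ (-((d : ℝ) / s)) * y ^ (d - 1) :=
          intervalIntegral.integral_mono_on hA.le (hint le_rfl hA.le)
            ((intervalIntegral.intervalIntegrable_pow _).const_mul _)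
            fun y hy => radialProfile_le_rpow_mul_pow hs ha.le hε hy.1
      _ = A * (A ^ (d - 1) * (a * A ^ s) ^ (-((d : ℝ) / s))) * (d : ℝ)⁻¹ := by
          rw [intervalIntegral.integral_const_mul, integral_pow, Nat.sub_add_cancel hd1,
            zero_pow hd, Nat.cast_sub hd1, Nat.cast_one, sub_add_cancel]
          rw [← mul_assoc, ← pow_succ', Nat.sub_add_cancel hd1]
          ring
      _ = a ^ (-((d : ℝ) / s)) * (d : ℝ)⁻¹ := by
          rw [pow_mul_rpow_neg_div_eq hd hs.ne' ha.le hA, mul_left_comm, mul_inv_cancel₀ hA.ne',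
            mul_one]
  have houter : ∫ y in A..r, radialProfile d s a (a * A ^ s) y ≤
      a ^ (-((d : ℝ) / s)) * Real.log (r / A) :=
    calc ∫ y in A..r, radialProfile d s a (a * A ^ s) y
        ≤ ∫ y in A..r, a ^ (-((d : ℝ) / s)) * y⁻¹ :=
          intervalIntegral.integral_mono_on hAr (hint hA.le hAr)
            ((intervalIntegral.intervalIntegrable_inv
              (fun y hy => (hA.trans_le (uIcc_of_le hAr ▸ hy).1).ne') continuousOn_id).const_mul _)
            fun y hy => radialProfile_le_rpow_mul_inv hd hs ha hε.le (hA.trans_le hy.1)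
      _ = a ^ (-((d : ℝ) / s)) * Real.log (r / A) := by
          rw [intervalIntegral.integral_const_mul, integral_inv_of_pos hA (hA.trans_le hAr)]
  rw [← intervalIntegral.integral_add_adjacent_intervals (hint le_rfl hA.le) (hint hA.le hAr)]
  exact (add_le_add hinner houter).trans_eq (mul_add _ _ _).symm

theorem le_integral_radialProfile (hd : d ≠ 0) (hs : 0 < s) (ha : 0 < a) (hA : 0 < A)
    (hAr : A ≤ r) :
    a ^ (-((d : ℝ) / s)) * (Real.log (r / A) - d / s / s) ≤
      ∫ y in 0..r, radialProfile d s a (a * A ^ s) y := by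
  have hε : 0 < a * A ^ s := by positivity
  have hr : 0 < r := hA.trans_le hAr
  have hint : ∀ {b c}, 0 ≤ b → b ≤ c →
      IntervalIntegrable (radialProfile d s a (a * A ^ s)) volume b c :=
    intervalIntegrable_radialProfile hs ha.le hε
  have hzero : (0 : ℝ) ∉ uIcc A r := fun h => (uIcc_of_le hAr ▸ h).1.not_gt hA
  have hint_inv : IntervalIntegrable (fun y : ℝ => y⁻¹) volume A r :=
    intervalIntegral.intervalIntegrable_inv (fun y hy h => hzero (h ▸ hy)) continuousOn_id
  have hint_rpow : IntervalIntegrable (fun y : ℝ => y ^ (-(s + 1))) volume A r :=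
    intervalIntegral.intervalIntegrable_rpow (Or.inr hzero)
  have htail : ∫ y in A..r, y ^ (-(s + 1)) ≤ A ^ (-s) / s := by
    rw [integral_rpow (Or.inr ⟨by linarith, hzero⟩), show -(s + 1) + 1 = -s by ring, div_neg,
      ← neg_div, neg_sub]
    exact div_le_div_of_nonneg_right (sub_le_self _ (by positivity)) hs.le
  calc a ^ (-((d : ℝ) / s)) * (Real.log (r / A) - d / s / s)
      = a ^ (-((d : ℝ) / s)) * (Real.log (r / A) - d / s * A ^ s * (A ^ (-s) / s)) := by
        rw [Real.rpow_neg hA.le]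
        field_simp
    _ ≤ a ^ (-((d : ℝ) / s)) *
          (Real.log (r / A) - d / s * A ^ s * ∫ y in A..r, y ^ (-(s + 1))) := by
        gcongr
    _ = ∫ y in A..r,
          a ^ (-((d : ℝ) / s)) * (y⁻¹ - d / s * (a * A ^ s / a) * y ^ (-(s + 1))) := by
        rw [mul_div_cancel_left₀ _ ha.ne', intervalIntegral.integral_const_mul,
          intervalIntegral.integral_sub hint_inv (hint_rpow.const_mul _),
          intervalIntegral.integral_const_mul, integral_inv_of_pos hA hr]
    _ ≤ ∫ y in A..r, radialProfile d s a (a * A ^ s) y :=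
        intervalIntegral.integral_mono_on hAr
          ((hint_inv.sub (hint_rpow.const_mul _)).const_mul _) (hint hA.le hAr)
          fun y hy => rpow_mul_sub_le_radialProfile hd hs ha hε.le (hA.trans_le hy.1)
    _ ≤ ∫ y in 0..r, radialProfile d s a (a * A ^ s) y := by
        rw [← intervalIntegral.integral_add_adjacent_intervals (hint le_rfl hA.le)
          (hint hA.le hAr)]
        exact le_add_of_nonneg_left (intervalIntegral.integral_nonneg hA.le
          fun y hy => radialProfile_nonneg ha.le hε.le hy.1)

theorem isBigO_integral_radialProfile_sub (hd : d ≠ 0) (hs : 0 < s) (ha : 0 < a) (hr : 0 < r) :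
    (fun ε => (∫ y in 0..r, radialProfile d s a ε y) - a ^ (-((d : ℝ) / s)) / s * |Real.log ε|)
      =O[𝓝[>] 0] fun _ => (1 : ℝ) := by
  set c := a ^ (-((d : ℝ) / s))
  refine .of_bound (c * ((d : ℝ)⁻¹ + d / s / s) + |c * (Real.log r + Real.log a / s)|) ?_
  filter_upwards [Ioo_mem_nhdsGT (show 0 < min 1 (a * r ^ s) by positivity)] with ε ⟨hε0, hε⟩
  set A := (ε / a) ^ s⁻¹
  have hA : 0 < A := by positivity
  have hεA : a * A ^ s = ε := by
    rw [Real.rpow_inv_rpow (by positivity) hs.ne', mul_div_cancel₀ _ ha.ne']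
  have hAr : A ≤ r :=
    calc A ≤ (r ^ s) ^ s⁻¹ := Real.rpow_le_rpow (by positivity)
          ((div_le_iff₀' ha).2 (hε.trans_le (min_le_right _ _)).le) (by positivity)
      _ = r := Real.rpow_rpow_inv hr.le hs.ne'
  have hlog : c * Real.log (r / A) =
      c / s * |Real.log ε| + c * (Real.log r + Real.log a / s) := by
    rw [Real.log_div hr.ne' hA.ne', Real.log_rpow (by positivity), Real.log_div hε0.ne' ha.ne',
      abs_of_neg (Real.log_neg hε0 (hε.trans_le (min_le_left _ _)))]
    field_simp
    ring
  have hupper := integral_radialProfile_le hd hs ha hA hAr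
  have hlower := le_integral_radialProfile hd hs ha hA hAr
  rw [hεA] at hupper hlower
  rw [norm_one, mul_one, Real.norm_eq_abs, abs_le]
  constructor <;> linarith [le_abs_self (c * (Real.log r + Real.log a / s)),
    neg_abs_le (c * (Real.log r + Real.log a / s)),
    show 0 ≤ c * (d : ℝ)⁻¹ by positivity, show 0 ≤ c * (d / s / s) by positivity]

end RadialProfile

/-- Remark 4.5, critical case `p = (n+γ)/(1+γ)` with constant coefficient `a₀`. -/
theorem tendsto_log_scaled_integral_constant_coeff
    {n : ℕ} (hn : 2 ≤ n) (γ r a0 : ℝ) (hγ : γ ∈ Ioo (0:ℝ) 1)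
    (hr : 0 < r) (ha0 : 0 < a0) :
    Tendsto (fun ε : ℝ =>
      |Real.log ε|⁻¹ *
        ∫ x' in {x' : EuclideanSpace ℝ (Fin (n-1)) | ‖x'‖ < r},
          (ε + a0 * ‖x'‖ ^ (1 + γ)) ^ (-(((n:ℝ) - 1) / (1 + γ))))
      (nhdsWithin 0 (Ioi 0))
      (nhds (a0 ^ ((1 - (n:ℝ)) / (1 + γ)) * 2 * Real.pi ^ (((n:ℝ) - 1) / 2) /
        ((1 + γ) * Real.Gamma (((n:ℝ) - 1) / 2)))) := by
  have hs : 0 < 1 + γ := by linarith [hγ.1]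
  have hd : n - 1 ≠ 0 := by omega
  have hnd : (n : ℝ) - 1 = (n - 1 : ℕ) := by rw [Nat.cast_sub (by omega), Nat.cast_one]
  have : Nonempty (Fin (n - 1)) := ⟨⟨0, by omega⟩⟩
  have hball : {x' : EuclideanSpace ℝ (Fin (n - 1)) | ‖x'‖ < r} = Metric.ball 0 r := by
    ext; simp
  have hlim := (tendsto_abs_log_inv_mul_of_isBigO
    (isBigO_integral_radialProfile_sub hd hs ha0 hr)).const_mul
      ((n - 1 : ℕ) * volume.real (Metric.ball (0 : EuclideanSpace ℝ (Fin (n - 1))) 1))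
  convert hlim using 2 with ε
  · rw [hball, setIntegral_ball_fun_norm_s11 volume
      (fun y => (ε + a0 * y ^ (1 + γ)) ^ (-(((n : ℝ) - 1) / (1 + γ)))),
      finrank_euclideanSpace_fin, hnd, intervalIntegral.integral_of_le hr.le,
      integral_Ioc_eq_integral_Ioo]
    simp only [nsmul_eq_mul, smul_eq_mul, radialProfile]
    ring
  · rw [EuclideanSpace.natCast_mul_volumeReal_ball_zero_one hd, hnd,
      show (1 - (n : ℝ)) = -(n - 1 : ℕ) by rw [← hnd]; ring]
    field_simp
end

section
/- Let n ≥ 1 be an integer and p > 1. For all vectors a, b ∈ ℝ^n, with the convention that |x|^{p−2}x := 0 when x = 0 and that (|a|+|b|)^{p−2}|a−b|² := 0 when a = b = 0, the following inequality holds: ⟨|a|^{p−2}a − |b|^{p−2}b, a − b⟩ ≥ (min{1, p−1}/2^{p−2}) · (|a|+|b|)^{p−2} · |a−b|². -/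
/-!
Write `s = ‖a‖`, `t = ‖b‖`, `x = ⟪a, b⟫`. Both sides of the inequality are affine in `x`, and
`|x| ≤ s t`, so it suffices to check the endpoints `x = ± s t`. With `q = p - 1` and
`m = (s + t) / 2` these are the one-dimensional inequalities
`s ^ q + t ^ q ≥ 2 min(1, q) m ^ q` (convexity of `y ^ q` for `q ≥ 1`, subadditivity for `q ≤ 1`)
and `s ^ q - t ^ q ≥ min(1, q) m ^ (q - 1) (s - t)` for `t ≤ s` (Bernoulli's inequality for
`q ≥ 1`; for `q ≤ 1`, convexity of `y ^ (q - 1)` makes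
`(m + d) ^ q - (m - d) ^ q - 2 q m ^ (q - 1) d` nondecreasing in `d`, up to `d = (s - t) / 2`).
-/

open Real
open scoped RealInnerProductSpace

lemma two_mul_le_two_rpow {q : ℝ} (hq : q ≤ 1) : 2 * q ≤ (2 : ℝ) ^ q := by
  -- tangent line of `2 ^ q` at `q = 1`, whose slope `2 log 2` is less than `2`
  have hlog : log 2 < 1 := log_two_lt_d9.trans (by norm_num)
  calc 2 * q ≤ 2 * ((q - 1) * log 2 + 1) := by nlinarith
    _ ≤ 2 * exp ((q - 1) * log 2) := by gcongr; exact add_one_le_exp _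
    _ = (2 : ℝ) ^ q := by
      rw [rpow_def_of_pos two_pos, show log 2 * q = log 2 + (q - 1) * log 2 by ring, exp_add,
        exp_log two_pos]

lemma two_mul_rpow_le_rpow_add_add_rpow_sub {r m x : ℝ} (hr : r ≤ 0) (hxm : |x| < m) :
    2 * m ^ r ≤ (m + x) ^ r + (m - x) ^ r := by
  obtain ⟨hx₁, hx₂⟩ := abs_lt.1 hxm
  have hm : 0 < m := (abs_nonneg x).trans_lt hxm
  have hprod : m ^ r * m ^ r ≤ (m + x) ^ r * (m - x) ^ r := by
    rw [← mul_rpow hm.le hm.le, ← mul_rpow (by linarith) (by linarith)]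
    exact rpow_le_rpow_of_nonpos (mul_pos (by linarith) (by linarith))
      (by nlinarith [sq_nonneg x]) hr
  have := rpow_pos_of_pos (show 0 < m + x by linarith) r
  have := rpow_pos_of_pos (show 0 < m - x by linarith) r
  nlinarith [sq_nonneg ((m + x) ^ r - (m - x) ^ r), rpow_pos_of_pos hm r]

lemma rpow_add_mul_le_rpow {q m y : ℝ} (hq : 1 ≤ q) (hm : 0 < m) (hy : 0 ≤ y) :
    m ^ q + q * m ^ (q - 1) * (y - m) ≤ y ^ q := by
  have hbern := one_add_mul_self_le_rpow_one_add (s := (y - m) / m)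
    (by rw [le_div_iff₀ hm]; linarith) hq
  rw [show 1 + (y - m) / m = y / m by field_simp; ring, div_rpow hy hm.le,
    le_div_iff₀ (rpow_pos_of_pos hm q)] at hbern
  rw [rpow_sub_one hm.ne']
  refine le_of_eq_of_le ?_ hbern
  field_simp

lemma two_mul_rpow_sub_one_mul_le_rpow_add_sub_rpow_sub {q m d : ℝ} (hq : 1 ≤ q) (hm : 0 < m)
    (hd : 0 ≤ d) (hdm : d ≤ m) :
    2 * m ^ (q - 1) * d ≤ (m + d) ^ q - (m - d) ^ q := by
  have hplus := rpow_add_mul_le_rpow hq hm (y := m + d) (by linarith)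
  have hminus : (m - d) ^ q ≤ m ^ (q - 1) * (m - d) := by
    calc (m - d) ^ q = (m - d) ^ (q - 1) * (m - d) := by
          rw [← rpow_add_one' (by linarith) (by linarith), sub_add_cancel]
      _ ≤ m ^ (q - 1) * (m - d) := by
          gcongr
          linarith
  have hmq : m ^ q = m ^ (q - 1) * m := by
    rw [← rpow_add_one hm.ne', sub_add_cancel]
  have := rpow_nonneg hm.le (q - 1)
  nlinarith [mul_nonneg (mul_nonneg (sub_nonneg.2 hq) this) hd]

lemma two_mul_mul_rpow_sub_one_mul_le_rpow_add_sub_rpow_sub {q m d : ℝ} (hq₀ : 0 < q)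
    (hq₁ : q ≤ 1) (hd : 0 ≤ d) (hdm : d ≤ m) :
    2 * q * m ^ (q - 1) * d ≤ (m + d) ^ q - (m - d) ^ q := by
  set g : ℝ → ℝ := fun x ↦ (m + x) ^ q - (m - x) ^ q - 2 * q * m ^ (q - 1) * x
  have hderiv : ∀ x ∈ Set.Ioo 0 d,
      HasDerivAt g (q * ((m + x) ^ (q - 1) + (m - x) ^ (q - 1) - 2 * m ^ (q - 1))) x := by
    rintro x ⟨hx₀, hxd⟩
    have hplus := ((hasDerivAt_id' x).const_add m).rpow_const (p := q) (by left; linarith)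
    have hminus := ((hasDerivAt_id' x).const_sub m).rpow_const (p := q) (by left; linarith)
    exact ((hplus.sub hminus).sub ((hasDerivAt_id' x).const_mul (2 * q * m ^ (q - 1)))).congr_deriv
      (by ring)
  have hmono : MonotoneOn g (Set.Icc 0 d) := by
    refine monotoneOn_of_hasDerivWithinAt_nonneg (convex_Icc 0 d) ?_
      (fun x hx ↦ (hderiv x (by rwa [interior_Icc] at hx)).hasDerivWithinAt) ?_
    · fun_prop (disch := first | exact hq₀.le | (right; exact hq₀.le))
    · intro x hx
      rw [interior_Icc] at hx
      have := two_mul_rpow_le_rpow_add_add_rpow_sub (r := q - 1) (x := x) (m := m)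
        (by linarith) (by rw [abs_of_pos hx.1]; linarith [hx.2])
      nlinarith
  have := hmono (Set.left_mem_Icc.2 hd) (Set.right_mem_Icc.2 hd) hd
  simpa [g] using this

lemma two_mul_rpow_half_add_le_rpow_add_rpow {q s t : ℝ} (hq : 1 ≤ q) (hs : 0 ≤ s)
    (ht : 0 ≤ t) :
    2 * ((s + t) / 2) ^ q ≤ s ^ q + t ^ q := by
  have := (convexOn_rpow hq).2 (Set.mem_Ici.2 hs) (Set.mem_Ici.2 ht)
    (by norm_num : (0 : ℝ) ≤ 1 / 2) (by norm_num : (0 : ℝ) ≤ 1 / 2) (by norm_num)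
  simp only [smul_eq_mul] at this
  rw [show 1 / 2 * s + 1 / 2 * t = (s + t) / 2 by ring] at this
  linarith

lemma two_mul_mul_rpow_half_add_le_rpow_add_rpow {q s t : ℝ} (hq₀ : 0 ≤ q) (hq₁ : q ≤ 1)
    (hs : 0 ≤ s) (ht : 0 ≤ t) :
    2 * q * ((s + t) / 2) ^ q ≤ s ^ q + t ^ q :=
  calc 2 * q * ((s + t) / 2) ^ q ≤ 2 ^ q * ((s + t) / 2) ^ q := by
        gcongr
        exact two_mul_le_two_rpow hq₁
    _ = (s + t) ^ q := by
        rw [← mul_rpow two_pos.le (by positivity), mul_div_cancel₀ _ two_ne_zero]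
    _ ≤ s ^ q + t ^ q := rpow_add_le_add_rpow hs ht hq₀ hq₁

lemma min_mul_rpow_mul_sq_le_rpow_sub_rpow_mul {q s t : ℝ} (hq : 0 < q) (hs : 0 ≤ s)
    (ht : 0 ≤ t) :
    min 1 q * ((s + t) / 2) ^ (q - 1) * (s - t) ^ 2 ≤ (s ^ q - t ^ q) * (s - t) := by
  wlog hts : t ≤ s generalizing s t
  · have := this ht hs (le_of_not_ge hts)
    rw [add_comm] at this
    linarith
  rcases hts.eq_or_lt with rfl | hts
  · simp
  have hsub : min 1 q * (2 * ((s + t) / 2) ^ (q - 1) * ((s - t) / 2)) ≤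
      ((s + t) / 2 + (s - t) / 2) ^ q - ((s + t) / 2 - (s - t) / 2) ^ q := by
    rcases le_total 1 q with h | h
    · rw [min_eq_left h, one_mul]
      exact two_mul_rpow_sub_one_mul_le_rpow_add_sub_rpow_sub h (by linarith) (by linarith)
        (by linarith)
    · rw [min_eq_right h]
      linarith [two_mul_mul_rpow_sub_one_mul_le_rpow_add_sub_rpow_sub (m := (s + t) / 2)
        (d := (s - t) / 2) hq h (by linarith) (by linarith)]
  rw [show (s + t) / 2 + (s - t) / 2 = s by ring, show (s + t) / 2 - (s - t) / 2 = t by ring]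
    at hsub
  calc min 1 q * ((s + t) / 2) ^ (q - 1) * (s - t) ^ 2
      = min 1 q * (2 * ((s + t) / 2) ^ (q - 1) * ((s - t) / 2)) * (s - t) := by ring
    _ ≤ (s ^ q - t ^ q) * (s - t) := by gcongr

lemma min_mul_rpow_mul_sq_le_rpow_add_rpow_mul {q s t : ℝ} (hq : 0 < q) (hs : 0 ≤ s)
    (ht : 0 ≤ t) :
    min 1 q * ((s + t) / 2) ^ (q - 1) * (s + t) ^ 2 ≤ (s ^ q + t ^ q) * (s + t) := by
  rcases (add_nonneg hs ht).eq_or_lt with hst | hst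
  · simp [← hst]
  have hmid : ((s + t) / 2) ^ (q - 1) * (s + t) = 2 * ((s + t) / 2) ^ q := by
    rw [rpow_sub_one (by positivity)]
    field_simp
  have hadd : min 1 q * (2 * ((s + t) / 2) ^ q) ≤ s ^ q + t ^ q := by
    rcases le_total 1 q with h | h
    · rw [min_eq_left h, one_mul]
      exact two_mul_rpow_half_add_le_rpow_add_rpow h hs ht
    · rw [min_eq_right h, ← mul_assoc]
      linarith [two_mul_mul_rpow_half_add_le_rpow_add_rpow hq.le h hs ht]
  calc min 1 q * ((s + t) / 2) ^ (q - 1) * (s + t) ^ 2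
      = min 1 q * (2 * ((s + t) / 2) ^ q) * (s + t) := by rw [← hmid]; ring
    _ ≤ (s ^ q + t ^ q) * (s + t) := by gcongr

lemma mul_le_of_abs_le {α β x c : ℝ} (hx : |x| ≤ c) (h₁ : β * c ≤ α) (h₂ : -(β * c) ≤ α) :
    β * x ≤ α :=
  calc β * x ≤ |β| * |x| := by rw [← abs_mul]; exact le_abs_self _
    _ ≤ |β| * c := by gcongr
    _ = |β * c| := by rw [abs_mul, abs_of_nonneg ((abs_nonneg x).trans hx)]
    _ ≤ α := abs_le'.2 ⟨h₁, h₂⟩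

lemma min_div_rpow_mul_le_of_abs_le {p s t x : ℝ} (hp : 1 < p) (hs : 0 ≤ s) (ht : 0 ≤ t)
    (hx : |x| ≤ s * t) :
    min 1 (p - 1) / 2 ^ (p - 2) * ((s + t) ^ (p - 2) * (s ^ 2 + t ^ 2 - 2 * x)) ≤
      s ^ (p - 2) * s ^ 2 + t ^ (p - 2) * t ^ 2 - (s ^ (p - 2) + t ^ (p - 2)) * x := by
  have hL : min 1 (p - 1) / 2 ^ (p - 2) * (s + t) ^ (p - 2) =
      min 1 (p - 1) * ((s + t) / 2) ^ (p - 2) := by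
    rw [div_rpow (by positivity) two_pos.le]
    ring
  have hpow : ∀ {y : ℝ}, 0 ≤ y → y ^ (p - 2) * y = y ^ (p - 1) := fun hy ↦ by
    rw [← rpow_add_one' hy (by linarith)]
    ring_nf
  have hdiff := min_mul_rpow_mul_sq_le_rpow_sub_rpow_mul (q := p - 1) (by linarith) hs ht
  have hsum := min_mul_rpow_mul_sq_le_rpow_add_rpow_mul (q := p - 1) (by linarith) hs ht
  rw [show p - 1 - 1 = p - 2 by ring] at hdiff hsum
  rw [← mul_assoc, hL]
  set L := min 1 (p - 1) * ((s + t) / 2) ^ (p - 2)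
  have := mul_le_of_abs_le (β := s ^ (p - 2) + t ^ (p - 2) - 2 * L)
    (α := s ^ (p - 2) * s ^ 2 + t ^ (p - 2) * t ^ 2 - L * (s ^ 2 + t ^ 2)) hx
    (by linear_combination hdiff - (s - t) * hpow hs + (s - t) * hpow ht)
    (by linear_combination hsum - (s + t) * hpow hs - (s + t) * hpow ht)
  linarith

lemma min_div_rpow_mul_le_inner_rpow_smul_sub_rpow_smul {E : Type*} [NormedAddCommGroup E]
    [InnerProductSpace ℝ E] {p : ℝ} (hp : 1 < p) (a b : E) :
    min 1 (p - 1) / 2 ^ (p - 2) * ((‖a‖ + ‖b‖) ^ (p - 2) * ‖a - b‖ ^ 2) ≤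
      ⟪‖a‖ ^ (p - 2) • a - ‖b‖ ^ (p - 2) • b, a - b⟫ := by
  have hinner : ⟪‖a‖ ^ (p - 2) • a - ‖b‖ ^ (p - 2) • b, a - b⟫ =
      ‖a‖ ^ (p - 2) * ‖a‖ ^ 2 + ‖b‖ ^ (p - 2) * ‖b‖ ^ 2 -
        (‖a‖ ^ (p - 2) + ‖b‖ ^ (p - 2)) * ⟪a, b⟫ := by
    simp only [inner_sub_left, inner_sub_right, real_inner_smul_left, real_inner_self_eq_norm_sq,
      real_inner_comm a b]
    ring
  have hnorm : ‖a - b‖ ^ 2 = ‖a‖ ^ 2 + ‖b‖ ^ 2 - 2 * ⟪a, b⟫ := by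
    rw [norm_sub_sq_real]
    ring
  rw [hinner, hnorm]
  exact min_div_rpow_mul_le_of_abs_le hp (norm_nonneg a) (norm_nonneg b)
    (abs_real_inner_le_norm a b)

open Classical in
theorem pLaplacian_monotonicity_general
    {n : ℕ} (p : ℝ) (hp : 1 < p)
    (a b : EuclideanSpace ℝ (Fin n)) :
    (min 1 (p - 1) / 2 ^ (p - 2)) *
      (if a = 0 ∧ b = 0 then 0 else (‖a‖ + ‖b‖) ^ (p - 2) * ‖a - b‖ ^ 2) ≤
    ⟪(if a = 0 then 0 else ‖a‖ ^ (p - 2) • a) -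
        (if b = 0 then 0 else ‖b‖ ^ (p - 2) • b), a - b⟫ := by
  have hsmul : ∀ v : EuclideanSpace ℝ (Fin n),
      (if v = 0 then 0 else ‖v‖ ^ (p - 2) • v) = ‖v‖ ^ (p - 2) • v := by
    intro v
    split_ifs with hv <;> simp [hv]
  have hcoef : (if a = 0 ∧ b = 0 then 0 else (‖a‖ + ‖b‖) ^ (p - 2) * ‖a - b‖ ^ 2) =
      (‖a‖ + ‖b‖) ^ (p - 2) * ‖a - b‖ ^ 2 := by
    split_ifs with hab
    · simp [hab.1, hab.2]
    · rfl
  rw [hsmul, hsmul, hcoef]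
  exact min_div_rpow_mul_le_inner_rpow_smul_sub_rpow_smul hp a b

open Classical in
/-- Monotonicity inequality for the p-Laplacian vector field `ξ ↦ |ξ|^{p-2}ξ`,
with the conventions `|x|^{p-2}x := 0` for `x = 0` and
`(|a|+|b|)^{p-2}|a-b|² := 0` for `a = b = 0`. -/
theorem pLaplacian_monotonicity
    {n : ℕ} (hn : 1 ≤ n) (p : ℝ) (hp : 1 < p)
    (a b : EuclideanSpace ℝ (Fin n)) :
    (min 1 (p - 1) / 2 ^ (p - 2)) *
      (if a = 0 ∧ b = 0 then 0 else (‖a‖ + ‖b‖) ^ (p - 2) * ‖a - b‖ ^ 2) ≤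
    ⟪(if a = 0 then 0 else ‖a‖ ^ (p - 2) • a) -
        (if b = 0 then 0 else ‖b‖ ^ (p - 2) • b), a - b⟫ :=
  pLaplacian_monotonicity_general p hp a b
end

section
/- Let n ≥ 2 be an integer, p > 1, c2 > 0, and r ∈ (0,1). Let Σ' ⊂ ℝ^{n−1} be a nonempty bounded open convex set, and write d(x') := dist(x', Σ'). Then lim_{ε→0⁺} ε^{p−1} · ∫_{{x' ∈ ℝ^{n−1} : 0 < d(x') < r}} (ε + c2·d(x')²)^{1−p} dx' = 0. -/
open MeasureTheory Filter Set Metric Topology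

/-!
For each point of the collar, `d(x') > 0`, so `ε^{p-1} (ε + c₂ d(x')²)^{1-p} → 0` as `ε → 0⁺`; and
since `ε + c₂ d² ≥ ε` and `1 - p < 0`, the integrand is bounded by `1`. The collar is a bounded set,
hence of finite measure, and dominated convergence gives the limit.
-/

namespace Real

lemma rpow_sub_one_mul_add_rpow_one_sub_le_one {p ε t : ℝ} (hp : 1 < p) (hε : 0 < ε)
    (ht : 0 ≤ t) : ε ^ (p - 1) * (ε + t) ^ (1 - p) ≤ 1 :=
  calc ε ^ (p - 1) * (ε + t) ^ (1 - p) ≤ ε ^ (p - 1) * ε ^ (1 - p) := by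
        gcongr ε ^ (p - 1) * ?_
        exact rpow_le_rpow_of_nonpos hε (le_add_of_nonneg_right ht) (by linarith)
    _ = 1 := by rw [← rpow_add hε]; simp

lemma tendsto_rpow_sub_one_mul_add_rpow_one_sub {p t : ℝ} (hp : 1 < p) (ht : 0 < t) :
    Tendsto (fun ε : ℝ => ε ^ (p - 1) * (ε + t) ^ (1 - p)) (𝓝[>] 0) (𝓝 0) := by
  refine tendsto_nhdsWithin_of_tendsto_nhds ?_
  have hcont : ContinuousAt (fun ε : ℝ => ε ^ (p - 1) * (ε + t) ^ (1 - p)) 0 :=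
    (continuousAt_id.rpow_const (Or.inr (by linarith))).mul
      ((continuousAt_id.add continuousAt_const).rpow_const (Or.inl (by simpa using ht.ne')))
  simpa [zero_rpow (by linarith : p - 1 ≠ 0)] using hcont.tendsto

end Real

section DominatedConvergence

variable {X : Type*} [MeasurableSpace X] {μ : Measure X} [IsFiniteMeasure μ]

theorem tendsto_rpow_sub_one_mul_integral_add_rpow_one_sub {p : ℝ} (hp : 1 < p) {g : X → ℝ}
    (hg : AEMeasurable g μ) (hg_pos : ∀ᵐ x ∂μ, 0 < g x) :
    Tendsto (fun ε : ℝ => ε ^ (p - 1) * ∫ x, (ε + g x) ^ (1 - p) ∂μ) (𝓝[>] 0) (𝓝 0) := by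
  simp_rw [← integral_const_mul]
  rw [show 𝓝 (0 : ℝ) = 𝓝 (∫ _, 0 ∂μ) by simp]
  refine tendsto_integral_filter_of_dominated_convergence (fun _ => 1)
    (Eventually.of_forall fun ε => ?_) ?_ (integrable_const 1) ?_
  · exact (aemeasurable_const.mul ((aemeasurable_const.add hg).pow_const _)).aestronglyMeasurable
  · filter_upwards [self_mem_nhdsWithin] with ε (hε : 0 < ε)
    filter_upwards [hg_pos] with x hx
    rw [Real.norm_of_nonneg (by positivity)]
    exact Real.rpow_sub_one_mul_add_rpow_one_sub_le_one hp hε hx.le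
  · filter_upwards [hg_pos] with x hx
    exact Real.tendsto_rpow_sub_one_mul_add_rpow_one_sub hp hx

end DominatedConvergence

section Collar

variable {X : Type*} [PseudoMetricSpace X]

def Metric.collar (S : Set X) (r : ℝ) : Set X := {x | 0 < infDist x S ∧ infDist x S < r}

lemma Metric.isOpen_collar (S : Set X) (r : ℝ) : IsOpen (collar S r) :=
  isOpen_Ioo.preimage (continuous_infDist_pt S)

lemma Bornology.IsBounded.collar {S : Set X} (hS : Bornology.IsBounded S) (r : ℝ) :
    Bornology.IsBounded (collar S r) := by
  refine (hS.thickening (δ := r)).subset fun x hx => ?_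
  have hne : S.Nonempty := nonempty_iff_ne_empty.2 fun h => by
    simpa [h] using hx.1
  exact (mem_thickening_iff_infDist_lt hne).2 hx.2

end Collar

theorem collar_integral_lower_order_general
    {n : ℕ} (p c2 r : ℝ) (hp : 1 < p) (hc2 : 0 < c2)
    (S : Set (EuclideanSpace ℝ (Fin (n-1))))
    (hb : Bornology.IsBounded S) :
    Tendsto (fun ε : ℝ =>
      ε ^ (p - 1) *
        ∫ x' in {x' : EuclideanSpace ℝ (Fin (n-1)) |
            0 < infDist x' S ∧ infDist x' S < r},
          (ε + c2 * (infDist x' S) ^ 2) ^ (1 - p))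
      (nhdsWithin 0 (Ioi 0)) (nhds 0) := by
  have : IsFiniteMeasure (volume.restrict (collar S r)) :=
    isFiniteMeasure_restrict.2 (hb.collar r).measure_lt_top.ne
  refine tendsto_rpow_sub_one_mul_integral_add_rpow_one_sub (μ := volume.restrict (collar S r)) hp
    (continuous_const.mul ((continuous_infDist_pt S).pow 2)).aemeasurable ?_
  refine (ae_restrict_iff' (isOpen_collar S r).measurableSet).2 (ae_of_all _ fun x hx => ?_)
  exact mul_pos hc2 (pow_pos hx.1 2)

/-- The collar outside the flat region contributes a lower-order term:
`ε^{p-1} ∫_{0<d<r} (ε + c₂ d²)^{1-p} → 0` as `ε → 0⁺`. -/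
theorem collar_integral_lower_order
    {n : ℕ} (hn : 2 ≤ n) (p c2 r : ℝ) (hp : 1 < p) (hc2 : 0 < c2)
    (hr : r ∈ Ioo (0:ℝ) 1)
    (S : Set (EuclideanSpace ℝ (Fin (n-1))))
    (hne : S.Nonempty) (hb : Bornology.IsBounded S) (ho : IsOpen S)
    (hconv : Convex ℝ S) :
    Tendsto (fun ε : ℝ =>
      ε ^ (p - 1) *
        ∫ x' in {x' : EuclideanSpace ℝ (Fin (n-1)) |
            0 < infDist x' S ∧ infDist x' S < r},
          (ε + c2 * (infDist x' S) ^ 2) ^ (1 - p))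
      (nhdsWithin 0 (Ioi 0)) (nhds 0) :=
  collar_integral_lower_order_general p c2 r hp hc2 S hb
end

section
/- Let n ≥ 3 be an integer, γ ∈ (0,1), p > (n+γ)/(1+γ), and r > 0. Let a : S^{n−2} → ℝ be a continuous function on the unit sphere S^{n−2} ⊂ ℝ^{n−1} with a(θ) ≥ a_min for all θ ∈ S^{n−2}, for some constant a_min > 0. Then lim_{ε→0⁺} ε^{(p−1)−(n−1)/(1+γ)} · ∫_{{|x'|<r}} (ε + a(x'/|x'|)·|x'|^{1+γ})^{1−p} dx' = ∫_{S^{n−2}} ∫_0^∞ s^{n−2}/(1+a(θ)·s^{1+γ})^{p−1} ds dσ(θ), where σ denotes the surface measure on S^{n−2}. -/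
/-!
In polar coordinates the integral becomes
`∫_θ ∫_0^r s^(n-2) (ε + a(θ) s^(1+γ))^(1-p) ds dσ(θ)`. The substitution `s = ε^(1/(1+γ)) t`
pulls out exactly the factor `ε^((n-1)/(1+γ) - (p-1))` and leaves
`∫_θ ∫_0^R t^(n-2) (1 + a(θ) t^(1+γ))^(1-p) dt dσ(θ)` with `R = r ε^(-1/(1+γ)) → ∞`.
Since `a ≥ a_min`, all these integrands are dominated by the one for `a_min`, which is integrable
on `(0, ∞)` precisely because `p > (n+γ)/(1+γ)`; dominated convergence on the (finite) sphere
then gives the limit.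
-/

open MeasureTheory Filter Set Metric Topology

section PolarCoordinates

variable {E : Type*} [NormedAddCommGroup E] [NormedSpace ℝ E]

theorem integral_eq_integral_toSphere_integral_Ioi [FiniteDimensional ℝ E] [MeasurableSpace E]
    [BorelSpace E] [Nontrivial E] {F : Type*}
    [NormedAddCommGroup F] [NormedSpace ℝ F] (μ : Measure E) [μ.IsAddHaarMeasure] {f : E → F}
    (hf : Integrable f μ) :
    ∫ x, f x ∂μ = ∫ θ, (∫ s in Ioi (0 : ℝ),
      s ^ (Module.finrank ℝ E - 1) • f (s • (θ : E))) ∂μ.toSphere := by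
  set ν := Measure.volumeIoiPow (Module.finrank ℝ E - 1)
  have hpres := μ.measurePreserving_homeomorphUnitSphereProd
  have hemb := (homeomorphUnitSphereProd E).measurableEmbedding
  set g : sphere (0 : E) 1 × Ioi (0 : ℝ) → F := fun q => f (q.2.1 • q.1.1)
  have hg : ∀ x : ({0}ᶜ : Set E), g (homeomorphUnitSphereProd E x) = f x := fun x => by
    simp [g, smul_inv_smul₀ (norm_ne_zero_iff.2 x.2)]
  have hgi : Integrable g (μ.toSphere.prod ν) := by
    rw [← hpres.integrable_comp_emb hemb]
    simp only [Function.comp_def, hg]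
    exact (integrableOn_iff_comap_subtypeVal (measurableSet_singleton 0).compl).1 hf.integrableOn
  calc ∫ x, f x ∂μ = ∫ x : ({0}ᶜ : Set E), f x ∂(μ.comap (↑)) := by
        rw [integral_subtype_comap (measurableSet_singleton _).compl, restrict_compl_singleton]
    _ = ∫ q, g q ∂(μ.toSphere.prod ν) := by
        simp only [← hg]
        exact hpres.integral_comp hemb g
    _ = ∫ θ, ∫ s, g (θ, s) ∂ν ∂μ.toSphere := integral_prod g hgi
    _ = _ := by
        refine integral_congr_ae (.of_forall fun θ => ?_)
        simp only [ν, Measure.volumeIoiPow, ENNReal.ofReal]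
        rw [integral_withDensity_eq_integral_smul
            (measurable_subtype_coe.pow_const _).real_toNNReal,
          integral_subtype_comap measurableSet_Ioi fun s : ℝ =>
            (s ^ (Module.finrank ℝ E - 1)).toNNReal • f (s • (θ : E))]
        refine setIntegral_congr_fun measurableSet_Ioi fun s hs => ?_
        rw [NNReal.smul_def, Real.coe_toNNReal _ (pow_nonneg (le_of_lt hs) _)]

theorem norm_smul_coe_sphere (θ : sphere (0 : E) 1) {s : ℝ} (hs : 0 ≤ s) : ‖s • (θ : E)‖ = s := by
  rw [norm_smul, mem_sphere_zero_iff_norm.1 θ.2, mul_one, Real.norm_of_nonneg hs]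

variable [DecidableEq E]

/-- With `q = 1 + γ` this is `δ(x)^(1-p)`, where `δ(x) = ε + a(x/‖x‖) ‖x‖^(1+γ)`; the origin,
where the direction is undefined, gets the value `0`. -/
noncomputable def angularWeight (a : sphere (0 : E) 1 → ℝ) (ε q p : ℝ) (x : E) : ℝ :=
  if h : x ≠ 0 then
    (ε + a ⟨‖x‖⁻¹ • x, mem_sphere_zero_iff_norm.mpr (norm_smul_inv_norm h)⟩ * ‖x‖ ^ q) ^ (1 - p)
  else 0

theorem measurable_angularWeight [MeasurableSpace E] [BorelSpace E] {a : sphere (0 : E) 1 → ℝ}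
    (ha : Continuous a) (ε q p : ℝ) :
    Measurable (angularWeight a ε q p) := by
  refine measurable_of_measurable_on_compl_finite {0} (finite_singleton 0) ?_
  have hdir : Measurable fun x : ({0}ᶜ : Set E) => a (homeomorphUnitSphereProd E x).1 :=
    (ha.comp (continuous_fst.comp (homeomorphUnitSphereProd E).continuous)).measurable
  convert (show Measurable fun x : ({0}ᶜ : Set E) =>
      (ε + a (homeomorphUnitSphereProd E x).1 * ‖(x : E)‖ ^ q) ^ (1 - p) by fun_prop) using 1
  funext x
  simp only [domRestrict, angularWeight, dif_pos (show (x : E) ≠ 0 from x.2)]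
  congr 3
  exact congrArg a (Subtype.ext (homeomorphUnitSphereProd_apply_fst_coe E x).symm)

theorem norm_angularWeight_le {a : sphere (0 : E) 1 → ℝ} (ha : ∀ θ, 0 ≤ a θ) {ε p : ℝ}
    (hε : 0 < ε) (hp : 1 ≤ p) (q : ℝ) (x : E) : ‖angularWeight a ε q p x‖ ≤ ε ^ (1 - p) := by
  by_cases hx : x ≠ 0
  · set θ : sphere (0 : E) 1 := ⟨‖x‖⁻¹ • x, mem_sphere_zero_iff_norm.mpr (norm_smul_inv_norm hx)⟩
    have hbase : ε ≤ ε + a θ * ‖x‖ ^ q :=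
      le_add_of_nonneg_right (mul_nonneg (ha θ) (Real.rpow_nonneg (norm_nonneg x) q))
    have hx' : angularWeight a ε q p x = (ε + a θ * ‖x‖ ^ q) ^ (1 - p) := dif_pos hx
    rw [hx', Real.norm_of_nonneg (Real.rpow_nonneg (hε.le.trans hbase) _)]
    exact Real.rpow_le_rpow_of_nonpos hε hbase (by linarith)
  · rw [angularWeight, dif_neg hx, norm_zero]
    exact (Real.rpow_pos_of_pos hε _).le

theorem angularWeight_smul (a : sphere (0 : E) 1 → ℝ) (ε q p : ℝ) (θ : sphere (0 : E) 1)
    {s : ℝ} (hs : 0 < s) :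
    angularWeight a ε q p (s • (θ : E)) = (ε + a θ * s ^ q) ^ (1 - p) := by
  have hnorm := norm_smul_coe_sphere θ hs.le
  have hne : s • (θ : E) ≠ 0 := by
    rw [← norm_ne_zero_iff, hnorm]
    exact hs.ne'
  have hdir : ∀ h, a ⟨s⁻¹ • s • (θ : E), h⟩ = a θ := fun _ =>
    congrArg a (Subtype.ext (inv_smul_smul₀ hs.ne' _))
  simp only [angularWeight, dif_pos hne, hnorm, hdir]

theorem setIntegral_norm_lt_angularWeight [FiniteDimensional ℝ E] [MeasurableSpace E]
    [BorelSpace E] [Nontrivial E] (μ : Measure E) [μ.IsAddHaarMeasure]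
    {a : sphere (0 : E) 1 → ℝ} (ha_cont : Continuous a) (ha : ∀ θ, 0 ≤ a θ)
    {ε p r : ℝ} (hε : 0 < ε) (hp : 1 ≤ p) (hr : 0 ≤ r) (q : ℝ) :
    ∫ x in {x : E | ‖x‖ < r}, angularWeight a ε q p x ∂μ
      = ∫ θ, (∫ s in 0..r, s ^ ((Module.finrank ℝ E : ℝ) - 1) / (ε + a θ * s ^ q) ^ (p - 1))
          ∂μ.toSphere := by
  have hball : MeasurableSet {x : E | ‖x‖ < r} := measurableSet_lt measurable_norm measurable_const
  have hint : Integrable ({x : E | ‖x‖ < r}.indicator (angularWeight a ε q p)) μ := by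
    refine (integrable_indicator_iff hball).2 (IntegrableOn.of_bound ?_
      (measurable_angularWeight ha_cont ε q p).aestronglyMeasurable _
      (.of_forall (norm_angularWeight_le ha hε hp q)))
    simpa [← ball_zero_eq] using measure_ball_lt_top (μ := μ) (x := 0) (r := r)
  rw [← integral_indicator hball, integral_eq_integral_toSphere_integral_Ioi μ hint]
  refine integral_congr_ae (.of_forall fun θ => ?_)
  have hdim : ((Module.finrank ℝ E - 1 : ℕ) : ℝ) = Module.finrank ℝ E - 1 :=
    Nat.cast_pred Module.finrank_pos
  have hslice : ∀ s : ℝ, 0 < s →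
      s ^ (Module.finrank ℝ E - 1) • {x : E | ‖x‖ < r}.indicator (angularWeight a ε q p) (s • θ)
        = (Iio r).indicator (fun s =>
            s ^ ((Module.finrank ℝ E : ℝ) - 1) / (ε + a θ * s ^ q) ^ (p - 1)) s := by
    intro s hs
    have hnorm := norm_smul_coe_sphere θ hs.le
    have hbase : 0 ≤ ε + a θ * s ^ q :=
      add_nonneg hε.le (mul_nonneg (ha θ) (Real.rpow_nonneg hs.le q))
    by_cases hsr : s < r
    · simp only [indicator, mem_ofPred_eq, mem_Iio, hnorm, hsr, if_true,
        angularWeight_smul a ε q p θ hs, smul_eq_mul, ← Real.rpow_natCast, hdim, div_eq_mul_inv,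
        ← Real.rpow_neg hbase, neg_sub]
    · simp [indicator, hnorm, hsr]
  dsimp only
  rw [intervalIntegral.integral_of_le hr, integral_Ioc_eq_integral_Ioo, ← Ioi_inter_Iio,
    ← setIntegral_indicator measurableSet_Iio]
  exact setIntegral_congr_fun measurableSet_Ioi hslice

end PolarCoordinates

theorem intervalIntegral_rpow_div_add_mul_rpow_eq {k q p α ε r : ℝ} (hq : 0 < q) (hα : 0 ≤ α)
    (hε : 0 < ε) (hr : 0 ≤ r) :
    ∫ s in 0..r, s ^ k / (ε + α * s ^ q) ^ (p - 1)
      = ε ^ ((k + 1) / q - (p - 1)) *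
          ∫ t in 0..r * ε ^ (-q⁻¹), t ^ k / (1 + α * t ^ q) ^ (p - 1) := by
  set c := ε ^ q⁻¹
  have hc : 0 < c := Real.rpow_pos_of_pos hε _
  have hcq : c ^ q = ε := by rw [← Real.rpow_mul hε.le, inv_mul_cancel₀ hq.ne', Real.rpow_one]
  have hcr : c * (r * ε ^ (-q⁻¹)) = r := by
    rw [Real.rpow_neg hε.le, mul_left_comm, mul_inv_cancel₀ hc.ne', mul_one]
  have hscale : EqOn (fun t => (c * t) ^ k / (ε + α * (c * t) ^ q) ^ (p - 1))
      (fun t => c ^ k * ε ^ (-(p - 1)) * (t ^ k / (1 + α * t ^ q) ^ (p - 1)))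
      (uIcc 0 (r * ε ^ (-q⁻¹))) := by
    intro t ht
    rw [uIcc_of_le (by positivity)] at ht
    have h1 : 0 ≤ 1 + α * t ^ q := by have := ht.1; positivity
    simp only
    rw [Real.mul_rpow hc.le ht.1, Real.mul_rpow hc.le ht.1, hcq,
      show ε + α * (ε * t ^ q) = ε * (1 + α * t ^ q) by ring, Real.mul_rpow hε.le h1,
      Real.rpow_neg hε.le]
    field_simp
  have hexp : c * c ^ k * ε ^ (-(p - 1)) = ε ^ ((k + 1) / q - (p - 1)) := by
    rw [mul_comm c, ← Real.rpow_add_one hc.ne', ← Real.rpow_mul hε.le, ← Real.rpow_add hε]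
    ring_nf
  calc ∫ s in 0..r, s ^ k / (ε + α * s ^ q) ^ (p - 1)
      = c * ∫ t in 0..r * ε ^ (-q⁻¹), (c * t) ^ k / (ε + α * (c * t) ^ q) ^ (p - 1) := by
        rw [intervalIntegral.integral_comp_mul_left
            (fun s => s ^ k / (ε + α * s ^ q) ^ (p - 1)) hc.ne',
          mul_zero, hcr, smul_eq_mul, mul_inv_cancel_left₀ hc.ne']
    _ = _ := by
        rw [intervalIntegral.integral_congr hscale, intervalIntegral.integral_const_mul,
          ← mul_assoc, ← mul_assoc, hexp]

theorem integrableOn_rpow_div_one_add_mul_rpow_Ioi {k q p α : ℝ} (hk : -1 < k) (hq : 0 < q)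
    (hα : 0 < α) (hkp : k + 1 < q * (p - 1)) :
    IntegrableOn (fun t => t ^ k / (1 + α * t ^ q) ^ (p - 1)) (Ioi 0) := by
  have hp : 0 ≤ p - 1 := by
    by_contra! h
    nlinarith
  have hmeas : AEStronglyMeasurable (fun t : ℝ => t ^ k / (1 + α * t ^ q) ^ (p - 1)) :=
    (by fun_prop : Measurable fun t : ℝ => t ^ k / (1 + α * t ^ q) ^ (p - 1)).aestronglyMeasurable
  have hnorm : ∀ t : ℝ, 0 < t → ‖t ^ k / (1 + α * t ^ q) ^ (p - 1)‖
      = t ^ k / (1 + α * t ^ q) ^ (p - 1) := fun t ht => Real.norm_of_nonneg (by positivity)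
  rw [← Ioc_union_Ioi_eq_Ioi zero_le_one, integrableOn_union]
  constructor
  · refine Integrable.mono' (intervalIntegral.intervalIntegrable_rpow' hk).1 hmeas.restrict ?_
    filter_upwards [ae_restrict_mem measurableSet_Ioc] with t ht
    have ht0 : 0 < t := ht.1
    rw [hnorm t ht0]
    exact div_le_self (by positivity)
      (Real.one_le_rpow (le_add_of_nonneg_right (by positivity)) hp)
  · have hexp : k - q * (p - 1) < -1 := by linarith
    refine Integrable.mono'
      ((integrableOn_Ioi_rpow_of_lt hexp one_pos).const_mul (α ^ (-(p - 1)))) hmeas.restrict ?_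
    filter_upwards [ae_restrict_mem measurableSet_Ioi] with t (ht : 1 < t)
    have ht0 : 0 < t := one_pos.trans ht
    rw [hnorm t ht0]
    calc t ^ k / (1 + α * t ^ q) ^ (p - 1) ≤ t ^ k / (α * t ^ q) ^ (p - 1) := by
          gcongr
          linarith
      _ = α ^ (-(p - 1)) * t ^ (k - q * (p - 1)) := by
          rw [Real.mul_rpow hα.le (by positivity), ← Real.rpow_mul ht0.le, Real.rpow_sub ht0,
            Real.rpow_neg hα.le]
          field_simp

theorem tendsto_integral_intervalIntegral_of_dominated {X ι : Type*} [MeasurableSpace X]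
    {μ : Measure X} [IsFiniteMeasure μ] {g : X → ℝ → ℝ} {bound : ℝ → ℝ}
    (hg : Measurable (Function.uncurry g)) (h_bound : IntegrableOn bound (Ioi 0))
    (h_le : ∀ θ t, 0 < t → ‖g θ t‖ ≤ bound t) {l : Filter ι} [l.IsCountablyGenerated]
    {R : ι → ℝ} (hR : Tendsto R l atTop) :
    Tendsto (fun i => ∫ θ, (∫ t in 0..R i, g θ t) ∂μ) l
      (𝓝 (∫ θ, (∫ t in Ioi 0, g θ t) ∂μ)) := by
  have hgθ : ∀ θ, IntegrableOn (g θ) (Ioi 0) := fun θ =>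
    h_bound.mono' (hg.comp measurable_prodMk_left).aestronglyMeasurable
      ((ae_restrict_mem measurableSet_Ioi).mono fun t ht => h_le θ t ht)
  have hR0 : ∀ᶠ i in l, 0 ≤ R i := hR.eventually_ge_atTop 0
  refine tendsto_integral_filter_of_dominated_convergence (fun _ => ∫ t in Ioi 0, bound t)
    ?_ ?_ (integrable_const _)
    (.of_forall fun θ => intervalIntegral_tendsto_integral_Ioi 0 (hgθ θ) hR)
  · filter_upwards [hR0] with i hi
    simp only [intervalIntegral.integral_of_le hi]
    exact (hg.stronglyMeasurable.integral_prod_right'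
      (ν := volume.restrict (Ioc 0 (R i)))).aestronglyMeasurable
  · filter_upwards [hR0] with i hi
    refine .of_forall fun θ => ?_
    calc ‖∫ t in 0..R i, g θ t‖ ≤ ∫ t in 0..R i, bound t :=
          intervalIntegral.norm_integral_le_of_norm_le hi (.of_forall fun t ht => h_le θ t ht.1)
            ((intervalIntegrable_iff_integrableOn_Ioc_of_le hi).2
              (h_bound.mono_set Ioc_subset_Ioi_self))
      _ ≤ ∫ t in Ioi 0, bound t := by
          rw [intervalIntegral.integral_of_le hi]
          refine setIntegral_mono_set h_bound ?_ Ioc_subset_Ioi_self.eventuallyLE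
          filter_upwards [ae_restrict_mem measurableSet_Ioi] with t ht
          exact (norm_nonneg _).trans (h_le θ t ht)

open Classical in
/-- Remark 4.4: when the coefficient depends only on the angular variable, the
scaled integral converges to an explicit double integral over the unit sphere. -/
theorem tendsto_scaled_integral_angular_coeff
    {n : ℕ} (hn : 3 ≤ n) (γ p r a_min : ℝ) (hγ : γ ∈ Ioo (0:ℝ) 1)
    (hp : ((n:ℝ) + γ) / (1 + γ) < p) (hr : 0 < r) (hamin : 0 < a_min)
    (a : sphere (0 : EuclideanSpace ℝ (Fin (n-1))) 1 → ℝ)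
    (ha_cont : Continuous a) (ha : ∀ θ, a_min ≤ a θ) :
    Tendsto (fun ε : ℝ =>
      ε ^ ((p - 1) - ((n:ℝ) - 1) / (1 + γ)) *
        ∫ x' in {x' : EuclideanSpace ℝ (Fin (n-1)) | ‖x'‖ < r},
          if h : x' ≠ 0 then
            (ε + a ⟨‖x'‖⁻¹ • x',
                mem_sphere_zero_iff_norm.mpr (norm_smul_inv_norm h)⟩ *
              ‖x'‖ ^ (1 + γ)) ^ (1 - p)
          else 0)
      (nhdsWithin 0 (Ioi 0))
      (nhds (∫ θ, (∫ s in Ioi (0:ℝ),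
          s ^ ((n:ℝ) - 2) / (1 + a θ * s ^ (1 + γ)) ^ (p - 1))
        ∂((volume : Measure (EuclideanSpace ℝ (Fin (n-1)))).toSphere))) := by
  have hq : 0 < 1 + γ := by linarith [hγ.1]
  have hkp : (n : ℝ) - 2 + 1 < (1 + γ) * (p - 1) := by
    rw [div_lt_iff₀ hq] at hp
    linarith
  have hn3 : (3 : ℝ) ≤ n := by exact_mod_cast hn
  have hp1 : 1 ≤ p := by nlinarith
  have hapos : ∀ θ, 0 < a θ := fun θ => hamin.trans_le (ha θ)
  have : Nonempty (Fin (n - 1)) := ⟨⟨0, by omega⟩⟩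
  have hR : Tendsto (fun ε : ℝ => r * ε ^ (-(1 + γ)⁻¹)) (𝓝[>] 0) atTop :=
    (tendsto_rpow_neg_nhdsGT_zero (neg_neg_of_pos (inv_pos.2 hq))).const_mul_atTop hr
  refine (tendsto_integral_intervalIntegral_of_dominated
    (g := fun θ t => t ^ ((n : ℝ) - 2) / (1 + a θ * t ^ (1 + γ)) ^ (p - 1))
    (by fun_prop) (integrableOn_rpow_div_one_add_mul_rpow_Ioi (by linarith) hq hamin hkp)
    (fun θ t ht => ?_) hR).congr' ?_
  · have hbase : 0 ≤ 1 + a θ * t ^ (1 + γ) :=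
      add_nonneg zero_le_one (mul_nonneg (hapos θ).le (Real.rpow_nonneg ht.le _))
    rw [Real.norm_of_nonneg (by positivity)]
    gcongr
    exact ha θ
  · filter_upwards [self_mem_nhdsWithin] with ε (hε : 0 < ε)
    have hpolar := setIntegral_norm_lt_angularWeight volume ha_cont (fun θ => (hapos θ).le)
      hε hp1 hr.le (1 + γ)
    rw [finrank_euclideanSpace_fin, Nat.cast_pred (by omega), sub_sub, one_add_one_eq_two]
      at hpolar
    refine ((congrArg (ε ^ ((p - 1) - ((n : ℝ) - 1) / (1 + γ)) * ·) hpolar).trans ?_).symm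
    simp_rw [intervalIntegral_rpow_div_add_mul_rpow_eq hq (hapos _).le hε hr.le]
    rw [integral_const_mul, ← mul_assoc, ← Real.rpow_add hε,
      show p - 1 - ((n : ℝ) - 1) / (1 + γ) + ((n - 2 + 1) / (1 + γ) - (p - 1)) = 0 by ring,
      Real.rpow_zero, one_mul]
end
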